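/- arXiv:2203.16664 — 7 statements merged into one kernel-verified Lean document; each statement's English description precedes it below -/
import Mathlib

section
/- Let τ > 0, t ∈ ℝ, and let y : ℝ → ℝ be four times continuously differentiable. Then |(11y(t) − 18y(t−τ) + 9y(t−2τ) − 2y(t−3τ))/(6τ) − y'(t)| ≤ (9/4) · τ³ · sup_{s ∈ [t−3τ, t]} |y''''(s)|. -/
/-!
Expanding `y(t - jτ)` for `j = 1, 2, 3` to third order around `t` with Lagrange remainders
`y⁗(ξⱼ) (jτ)⁴ / 24`, the weights `11, -18, 9, -2` annihilate the terms of order `0, 2, 3` and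
reproduce `6τ y'(t)`. What is left is `τ³ (-3 y⁗(ξ₁) + 24 y⁗(ξ₂) - 27 y⁗(ξ₃)) / 24`, and
`(3 + 24 + 27) / 24 = 9 / 4`.
-/

open Set Finset Nat

theorem taylorWithinEval_eq_sum_iteratedDeriv {f : ℝ → ℝ} {n : ℕ} (hf : ContDiff ℝ n f)
    {s : Set ℝ} (hs : UniqueDiffOn ℝ s) {x₀ : ℝ} (hx₀ : x₀ ∈ s) (x : ℝ) :
    taylorWithinEval f n s x₀ x =
      ∑ k ∈ range (n + 1), iteratedDeriv k f x₀ * (x - x₀) ^ k / k ! := by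
  rw [taylor_within_apply]
  refine sum_congr rfl fun k hk => ?_
  rw [iteratedDerivWithin_eq_iteratedDeriv hs (hf.contDiffAt.of_le ?_) hx₀, smul_eq_mul]
  · ring
  · exact_mod_cast Nat.lt_succ_iff.mp (mem_range.mp hk)

theorem exists_taylor_lagrange {f : ℝ → ℝ} {n : ℕ} (hf : ContDiff ℝ (n + 1) f) (x₀ x : ℝ) :
    ∃ ξ ∈ uIcc x₀ x, f x = ∑ k ∈ range (n + 1), iteratedDeriv k f x₀ * (x - x₀) ^ k / k !
      + iteratedDeriv (n + 1) f ξ * (x - x₀) ^ (n + 1) / (n + 1)! := by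
  rcases eq_or_ne x₀ x with rfl | hx
  · refine ⟨x₀, left_mem_uIcc, ?_⟩
    simp [sum_range_succ']
  obtain ⟨ξ, hξ, h⟩ := taylor_mean_remainder_lagrange_iteratedDeriv hx hf.contDiffOn
  refine ⟨ξ, Ioo_subset_Icc_self hξ, ?_⟩
  rw [← h, taylorWithinEval_eq_sum_iteratedDeriv (hf.of_le (by norm_cast; omega))
    (uniqueDiffOn_uIcc hx) left_mem_uIcc]
  ring

theorem exists_taylor_three_sub {y : ℝ → ℝ} (hy : ContDiff ℝ 4 y) (t : ℝ) {h : ℝ} (hh : 0 ≤ h) :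
    ∃ ξ ∈ Icc (t - h) t, y (t - h) = y t - deriv y t * h + iteratedDeriv 2 y t * h ^ 2 / 2
      - iteratedDeriv 3 y t * h ^ 3 / 6 + iteratedDeriv 4 y ξ * h ^ 4 / 24 := by
  obtain ⟨ξ, hξ, hTaylor⟩ := exists_taylor_lagrange (n := 3) hy t (t - h)
  rw [Set.uIcc_of_ge (by linarith)] at hξ
  refine ⟨ξ, hξ, ?_⟩
  simp only [sum_range_succ, sum_range_zero, iteratedDeriv_zero, iteratedDeriv_one] at hTaylor
  norm_num [Nat.factorial] at hTaylor
  linear_combination hTaylor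

/-- The BDF-3 backward difference quotient `(11y(t) - 18y(t-τ) + 9y(t-2τ) - 2y(t-3τ))/(6τ)`
approximates `y'(t)` to third order in `τ`. -/
theorem bdf3_difference_quotient (τ t : ℝ) (hτ : 0 < τ) (y : ℝ → ℝ) (hy : ContDiff ℝ 4 y) :
    |(11 * y t - 18 * y (t - τ) + 9 * y (t - 2 * τ) - 2 * y (t - 3 * τ)) / (6 * τ) - deriv y t|
      ≤ 9 / 4 * τ ^ 3 * sSup ((fun s => |iteratedDeriv 4 y s|) '' Set.Icc (t - 3 * τ) t) := by
  set M := sSup ((fun s => |iteratedDeriv 4 y s|) '' Set.Icc (t - 3 * τ) t)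
  have le_M {a : ℝ} (ha : t - 3 * τ ≤ a) {ξ : ℝ} (hξ : ξ ∈ Icc a t) : |iteratedDeriv 4 y ξ| ≤ M :=
    (hy.continuous_iteratedDeriv 4 le_rfl).abs.continuousOn.le_sSup_image_Icc
      (Icc_subset_Icc_left ha hξ)
  obtain ⟨ξ₁, hξ₁, h₁⟩ := exists_taylor_three_sub hy t hτ.le
  obtain ⟨ξ₂, hξ₂, h₂⟩ := exists_taylor_three_sub hy t (h := 2 * τ) (by positivity)
  obtain ⟨ξ₃, hξ₃, h₃⟩ := exists_taylor_three_sub hy t (h := 3 * τ) (by positivity)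
  set A := iteratedDeriv 4 y ξ₁
  set B := iteratedDeriv 4 y ξ₂
  set C := iteratedDeriv 4 y ξ₃
  have error_eq : (11 * y t - 18 * y (t - τ) + 9 * y (t - 2 * τ) - 2 * y (t - 3 * τ)) / (6 * τ)
      - deriv y t = τ ^ 3 * ((-3 * A + 24 * B - 27 * C) / 24) := by
    rw [h₁, h₂, h₃]
    field_simp
    ring
  have remainder_le : |(-3 * A + 24 * B - 27 * C) / 24| ≤ 9 / 4 * M := by
    have hA := abs_le.mp (le_M (by linarith) hξ₁)
    have hB := abs_le.mp (le_M (by linarith) hξ₂)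
    have hC := abs_le.mp (le_M le_rfl hξ₃)
    rw [abs_le]
    constructor <;> linarith [hA.1, hA.2, hB.1, hB.2, hC.1, hC.2]
  calc _ = τ ^ 3 * |(-3 * A + 24 * B - 27 * C) / 24| := by
        rw [error_eq, abs_mul, abs_of_pos (by positivity)]
    _ ≤ τ ^ 3 * (9 / 4 * M) := by gcongr
    _ = _ := by ring
end

section
/- Let M be a real symmetric positive definite n×n matrix, K a real symmetric positive definite m×m matrix, and D an arbitrary real n×m matrix. Set S := M⁻¹ · D · K⁻¹ · Dᵀ (an n×n matrix) and let N₂ be the 2n×2n block matrix with blocks [[−2S, S],[I, 0]] (I the n×n identity). Then: (i) every complex eigenvalue of S is real and nonnegative; (ii) the spectral radius of N₂ equals r + √(r² + r), where r is the spectral radius of S. -/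
/-!
If `S v = μ v` with `v ≠ 0`, then `D K⁻¹ Dᵀ v = μ M v`, and pairing with `v` gives
`v* (D K⁻¹ Dᵀ) v = μ · v* M v`; both forms are nonnegative reals and the second is positive,
so `μ ≥ 0`.
An eigenvector `(x, y)` of `N₂` for `z` must have `x = z y` and `(1 - 2z) S y = z² y`, so the
eigenvalues of `N₂` are exactly the roots of `z² + 2μz - μ` for `μ` in the spectrum of `S`.
For `μ ≥ 0` these roots are `-μ ± √(μ² + μ)`, of largest modulus `μ + √(μ² + μ)`, which is
increasing in `μ`.
-/

open Matrix
open scoped ComplexOrder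

section
variable {n : Type*} [DecidableEq n]

/-- The matrix `N₂` of the neutral delay equation. -/
def neutralDelayMatrix {K : Type*} [Ring K] (S : Matrix n n K) : Matrix (n ⊕ n) (n ⊕ n) K :=
  fromBlocks ((-2 : K) • S) S 1 0

theorem neutralDelayMatrix_map {K L : Type*} [Ring K] [Ring L] (S : Matrix n n K) (f : K →+* L) :
    (neutralDelayMatrix S).map f = neutralDelayMatrix (S.map f) := by
  rw [neutralDelayMatrix, neutralDelayMatrix, fromBlocks_map, Matrix.map_smul' _ _ _ (map_mul f),
    Matrix.map_one _ (map_zero f) (map_one f), Matrix.map_zero _ (map_zero f), map_neg,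
    map_ofNat]

variable [Fintype n]

theorem Matrix.mem_spectrum_iff_exists_mulVec_eq_smul {K : Type*} [Field K] {A : Matrix n n K}
    {μ : K} : μ ∈ spectrum K A ↔ ∃ v ≠ 0, A *ᵥ v = μ • v := by
  rw [← spectrum_toLin', ← Module.End.hasEigenvalue_iff_mem_spectrum,
    Module.End.hasEigenvalue_iff, Submodule.ne_bot_iff]
  simp only [Module.End.mem_eigenspace_iff, toLin'_apply]
  exact exists_congr fun v => and_comm

section RCLike
variable {𝕜 : Type*} [RCLike 𝕜]

-- `Matrix.map` is an `ℝ`-algebra hom, so complexifying creates no new real eigenvalues.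
theorem Matrix.PosSemidef.map_ofReal {A : Matrix n n ℝ} (hA : A.PosSemidef) :
    (A.map (RCLike.ofReal : ℝ → 𝕜)).PosSemidef := by
  have hAc : (A.map (RCLike.ofReal : ℝ → 𝕜)).IsHermitian :=
    hA.isHermitian.map _ fun _ => (RCLike.conj_ofReal _).symm
  refine posSemidef_iff_isHermitian_and_spectrum_nonneg.mpr ⟨hAc, ?_⟩
  rw [hAc.spectrum_eq_image_range, ← hAc.spectrum_real_eq_range_eigenvalues]
  rintro _ ⟨t, ht, rfl⟩
  have htA : t ∈ spectrum ℝ A := AlgHom.spectrum_apply_subset (Algebra.ofId ℝ 𝕜).mapMatrix A ht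
  exact RCLike.ofReal_nonneg.mpr ((posSemidef_iff_isHermitian_and_spectrum_nonneg.mp hA).2 htA)

theorem Matrix.PosDef.map_ofReal {A : Matrix n n ℝ} (hA : A.PosDef) :
    (A.map (RCLike.ofReal : ℝ → 𝕜)).PosDef :=
  hA.posSemidef.map_ofReal.posDef_iff_isUnit.mpr (hA.isUnit.map (algebraMap ℝ 𝕜).mapMatrix)

theorem Matrix.PosDef.nonneg_of_mem_spectrum_of_mul_eq {M B S : Matrix n n 𝕜} (hM : M.PosDef)
    (hB : B.PosSemidef) (hMS : M * S = B) {μ : 𝕜} (hμ : μ ∈ spectrum 𝕜 S) : 0 ≤ μ := by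
  obtain ⟨v, hv, hSv⟩ := mem_spectrum_iff_exists_mulVec_eq_smul.mp hμ
  have hq : star v ⬝ᵥ (B *ᵥ v) = μ * (star v ⬝ᵥ (M *ᵥ v)) := by
    rw [← hMS, ← mulVec_mulVec, hSv, mulVec_smul, dotProduct_smul, smul_eq_mul]
  have hMv := hM.dotProduct_mulVec_pos hv
  have := mul_nonneg (hq ▸ hB.dotProduct_mulVec_nonneg v) (inv_nonneg.mpr hMv.le)
  rwa [mul_inv_cancel_right₀ hMv.ne'] at this

end RCLike

theorem neutralDelayMatrix_mulVec_sum_elim_eq_smul_iff {R : Type*} [CommRing R]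
    (S : Matrix n n R) (x y : n → R) (z : R) :
    neutralDelayMatrix S *ᵥ Sum.elim x y = z • Sum.elim x y ↔
      x = z • y ∧ (1 - 2 * z) • (S *ᵥ y) = z ^ 2 • y := by
  have hsmul : z • Sum.elim x y = Sum.elim (z • x) (z • y) := by ext (i | i) <;> rfl
  rw [neutralDelayMatrix, fromBlocks_mulVec, hsmul, Sum.elim_eq_iff]
  simp only [Sum.elim_comp_inl, Sum.elim_comp_inr, one_mulVec, zero_mulVec, add_zero, smul_mulVec]
  constructor
  · rintro ⟨htop, rfl⟩
    refine ⟨rfl, ?_⟩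
    rw [mulVec_smul] at htop
    rw [pow_two, mul_smul, ← htop]
    module
  · rintro ⟨rfl, h⟩
    refine ⟨?_, rfl⟩
    rw [mulVec_smul, smul_smul z, ← pow_two, ← h]
    module

theorem mem_spectrum_neutralDelayMatrix_iff {K : Type*} [Field K] {S : Matrix n n K} {z : K} :
    z ∈ spectrum K (neutralDelayMatrix S) ↔ ∃ μ ∈ spectrum K S, z ^ 2 + 2 * μ * z - μ = 0 := by
  simp only [mem_spectrum_iff_exists_mulVec_eq_smul]
  constructor
  · rintro ⟨w, hw, hNw⟩
    rw [← Sum.elim_comp_inl_inr w, neutralDelayMatrix_mulVec_sum_elim_eq_smul_iff] at hNw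
    obtain ⟨hx, hy⟩ := hNw
    have hy0 : w ∘ Sum.inr ≠ 0 := by
      intro h
      apply hw
      rw [← Sum.elim_comp_inl_inr w, hx, h, smul_zero, Sum.elim_zero_zero]
    have hz : 1 - 2 * z ≠ 0 := by
      intro h
      rw [h, zero_smul, eq_comm, smul_eq_zero] at hy
      have hz0 : z = 0 := (pow_eq_zero_iff two_ne_zero).mp (hy.resolve_right hy0)
      simp [hz0] at h
    have hμ : z ^ 2 / (1 - 2 * z) * (1 - 2 * z) = z ^ 2 := div_mul_cancel₀ _ hz
    refine ⟨z ^ 2 / (1 - 2 * z), ⟨w ∘ Sum.inr, hy0, ?_⟩, by linear_combination -hμ⟩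
    rw [div_eq_inv_mul, mul_smul, ← hy, inv_smul_smul₀ hz]
  · rintro ⟨μ, ⟨y, hy, hSy⟩, hμ⟩
    refine ⟨Sum.elim (z • y) y, fun h => hy (by simpa using congrArg (· ∘ Sum.inr) h), ?_⟩
    rw [neutralDelayMatrix_mulVec_sum_elim_eq_smul_iff, hSy, smul_smul]
    exact ⟨rfl, by congr 1; linear_combination -hμ⟩

theorem Complex.norm_le_of_sq_add_two_mul_sub_eq_zero {ν : ℝ} (hν : 0 ≤ ν) {z : ℂ}
    (hz : z ^ 2 + 2 * ν * z - ν = 0) : ‖z‖ ≤ ν + √(ν ^ 2 + ν) := by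
  set s := √(ν ^ 2 + ν)
  have hs2 : (s : ℂ) ^ 2 = ν ^ 2 + ν := by exact_mod_cast Real.sq_sqrt (by positivity)
  have hroots : (z - (-ν + s : ℝ)) * (z - (-ν - s : ℝ)) = 0 := by
    push_cast
    linear_combination hz - hs2
  have hνs : ν ≤ s := Real.le_sqrt_of_sq_le (by linarith)
  rcases mul_eq_zero.mp hroots with h | h <;>
  · rw [sub_eq_zero.mp h, Complex.norm_real, Real.norm_eq_abs, abs_le]
    constructor <;> linarith

theorem isGreatest_norm_spectrum_neutralDelayMatrix {S : Matrix n n ℂ}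
    (hS : ∀ μ ∈ spectrum ℂ S, 0 ≤ μ) {r : ℝ} (hr : IsGreatest ((‖·‖) '' spectrum ℂ S) r) :
    IsGreatest ((‖·‖) '' spectrum ℂ (neutralDelayMatrix S)) (r + √(r ^ 2 + r)) := by
  obtain ⟨⟨μ₀, hμ₀, hμ₀r⟩, hmax⟩ := hr
  have hr0 : 0 ≤ r := hμ₀r ▸ norm_nonneg μ₀
  have hrS : (r : ℂ) ∈ spectrum ℂ S := by
    rwa [← hμ₀r, ← Complex.eq_coe_norm_of_nonneg (hS μ₀ hμ₀)]
  have hs2 : (√(r ^ 2 + r) : ℂ) ^ 2 = r ^ 2 + r := by exact_mod_cast Real.sq_sqrt (by positivity)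
  refine ⟨⟨-(r + √(r ^ 2 + r) : ℝ), ?_, ?_⟩, ?_⟩
  · refine mem_spectrum_neutralDelayMatrix_iff.mpr ⟨r, hrS, ?_⟩
    push_cast
    linear_combination hs2
  · dsimp only
    rw [norm_neg, Complex.norm_real, Real.norm_eq_abs, abs_of_nonneg (by positivity)]
  · rintro _ ⟨z, hz, rfl⟩
    obtain ⟨μ, hμ, hzμ⟩ := mem_spectrum_neutralDelayMatrix_iff.mp hz
    rw [Complex.eq_coe_norm_of_nonneg (hS μ hμ)] at hzμ
    have hμr : ‖μ‖ ≤ r := hmax ⟨μ, hμ, rfl⟩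
    calc ‖z‖ ≤ ‖μ‖ + √(‖μ‖ ^ 2 + ‖μ‖) :=
          Complex.norm_le_of_sq_add_two_mul_sub_eq_zero (norm_nonneg μ) hzμ
      _ ≤ r + √(r ^ 2 + r) := by gcongr

end

/-- For symmetric positive definite `M`, `K` and arbitrary `D`, with `S = M⁻¹ D K⁻¹ Dᵀ`:
(i) every complex eigenvalue of `S` is real and nonnegative; (ii) the spectral radius of
the block matrix `N₂ = [[-2S, S], [I, 0]]` equals `r + √(r² + r)`, where `r` is the spectral
radius of `S`. -/
theorem spectral_radius_block_delay_matrix {n m : ℕ} (hn : 0 < n)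
    (M : Matrix (Fin n) (Fin n) ℝ) (hM : M.PosDef)
    (K : Matrix (Fin m) (Fin m) ℝ) (hK : K.PosDef)
    (D : Matrix (Fin n) (Fin m) ℝ) :
    (∀ μ ∈ spectrum ℂ ((M⁻¹ * D * K⁻¹ * Dᵀ).map Complex.ofReal), μ.im = 0 ∧ 0 ≤ μ.re) ∧
      ∃ r : ℝ,
        IsGreatest ((fun z : ℂ => ‖z‖) '' spectrum ℂ ((M⁻¹ * D * K⁻¹ * Dᵀ).map Complex.ofReal)) r ∧
        IsGreatest
          ((fun z : ℂ => ‖z‖) '' spectrum ℂ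
            ((Matrix.fromBlocks (-(2 : ℝ) • (M⁻¹ * D * K⁻¹ * Dᵀ)) (M⁻¹ * D * K⁻¹ * Dᵀ)
                (1 : Matrix (Fin n) (Fin n) ℝ) 0).map Complex.ofReal))
          (r + Real.sqrt (r ^ 2 + r)) := by
  set S := M⁻¹ * D * K⁻¹ * Dᵀ
  have hB : (D * K⁻¹ * Dᵀ).PosSemidef := by
    simpa using hK.inv.posSemidef.mul_mul_conjTranspose_same D
  have hMS : M * S = D * K⁻¹ * Dᵀ := by
    simp only [S, Matrix.mul_assoc]
    exact mul_nonsing_inv_cancel_left _ _ (isUnit_iff_ne_zero.mpr hM.det_pos.ne')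
  have hS : ∀ μ ∈ spectrum ℂ (S.map Complex.ofReal), 0 ≤ μ :=
    fun μ => hM.map_ofReal.nonneg_of_mem_spectrum_of_mul_eq hB.map_ofReal
      (by rw [← hMS]; exact (Matrix.map_mul (f := Complex.ofRealHom)).symm)
  have : NeZero n := ⟨hn.ne'⟩
  obtain ⟨μ₀, hμ₀, hmax⟩ := Set.exists_max_image _ (‖·‖) (Matrix.finite_spectrum _)
    (spectrum.nonempty_of_isAlgClosed_of_finiteDimensional ℂ (S.map Complex.ofReal))
  have hr : IsGreatest ((‖·‖) '' spectrum ℂ (S.map Complex.ofReal)) ‖μ₀‖ :=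
    ⟨⟨μ₀, hμ₀, rfl⟩, by rintro _ ⟨μ, hμ, rfl⟩; exact hmax μ hμ⟩
  refine ⟨fun μ hμ => ?_, ‖μ₀‖, hr, ?_⟩
  · obtain ⟨hre, him⟩ := Complex.nonneg_iff.mp (hS μ hμ)
    exact ⟨him.symm, hre⟩
  · have hN : (neutralDelayMatrix S).map Complex.ofReal =
        neutralDelayMatrix (S.map Complex.ofReal) :=
      neutralDelayMatrix_map S Complex.ofRealHom
    rw [← neutralDelayMatrix.eq_def, hN]
    exact isGreatest_norm_spectrum_neutralDelayMatrix hS hr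
end

section
/- Let M be a real symmetric positive definite n×n matrix, K a real symmetric positive definite m×m matrix, and D an arbitrary real n×m matrix. Set S := M⁻¹ · D · K⁻¹ · Dᵀ and let N₂ be the 2n×2n block matrix with blocks [[−2S, S],[I, 0]]. Then the spectral radius of N₂ is strictly less than 1 if and only if the spectral radius of S is strictly less than 1/3. -/
open Matrix
open scoped ComplexOrder

/-!
An eigenvector `v` of `S = M⁻¹ (D K⁻¹ Dᵀ)` for `μ` gives `v* (D K⁻¹ Dᵀ) v = μ · v* M v`, so the
eigenvalues of `S` are nonnegative reals. The block matrix `N₂` linearizes the quadratic eigenvalue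
problem `z² v = z (-2S) v + S v`, so its eigenvalues are the roots `-μ ± √(μ² + μ)` of
`z² + 2μz - μ = 0` for `μ` in the spectrum of `S`. The root `-μ + √(μ² + μ)` always lies in
`[0, 1/2)`, while `|-μ - √(μ² + μ)| < 1` holds exactly when `μ < 1/3`.
-/

theorem Sum.smul_elim {α β R N : Type*} [SMul R N] (c : R) (x : α → N) (y : β → N) :
    c • Sum.elim x y = Sum.elim (c • x) (c • y) := by
  ext (i | i) <;> rfl

theorem sSup_image_lt_iff_of_finite {α : Type*} {s : Set α} (hs : s.Finite) (f : α → ℝ) {r : ℝ}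
    (hr : 0 < r) : sSup (f '' s) < r ↔ ∀ x ∈ s, f x < r := by
  rcases s.eq_empty_or_nonempty with rfl | hne
  · simp [hr]
  · rw [(hs.image f).csSup_lt_iff (hne.image f), Set.forall_mem_image]

namespace Matrix

variable {ι K : Type*} [Fintype ι] [DecidableEq ι] [Field K]

theorem mem_spectrum_iff_exists_mulVec_eq_smul_s9 {A : Matrix ι ι K} {μ : K} :
    μ ∈ spectrum K A ↔ ∃ v ≠ 0, A *ᵥ v = μ • v := by
  rw [← spectrum_toLin', ← Module.End.hasEigenvalue_iff_mem_spectrum,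
    Module.End.hasEigenvalue_iff, Submodule.ne_bot_iff]
  simp only [Module.End.mem_eigenspace_iff, toLin'_apply]
  exact exists_congr fun v => and_comm

theorem mem_spectrum_fromBlocks_one_zero_iff {A B : Matrix ι ι K} {z : K} :
    z ∈ spectrum K (fromBlocks A B (1 : Matrix ι ι K) 0) ↔
      ∃ v ≠ 0, z ^ 2 • v = z • A *ᵥ v + B *ᵥ v := by
  simp only [mem_spectrum_iff_exists_mulVec_eq_smul_s9]
  constructor
  · rintro ⟨w, hw0, hw⟩
    obtain ⟨x, v, rfl⟩ : ∃ x v, w = Sum.elim x v := ⟨_, _, (Sum.elim_comp_inl_inr w).symm⟩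
    rw [fromBlocks_mulVec, Sum.elim_comp_inl, Sum.elim_comp_inr, one_mulVec, zero_mulVec,
      add_zero, Sum.smul_elim, Sum.elim_eq_iff] at hw
    obtain ⟨hx, rfl⟩ := hw
    refine ⟨v, fun hv0 => hw0 ?_, ?_⟩
    · rw [hv0, smul_zero, Sum.elim_zero_zero]
    · rw [pow_two, mul_smul, ← hx, mulVec_smul]
  · rintro ⟨v, hv0, hv⟩
    refine ⟨Sum.elim (z • v) v, fun h => hv0 (by simpa using congrArg (· ∘ Sum.inr) h), ?_⟩
    rw [fromBlocks_mulVec, Sum.elim_comp_inl, Sum.elim_comp_inr, one_mulVec, zero_mulVec,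
      add_zero, Sum.smul_elim, mulVec_smul, ← mul_smul, ← pow_two, hv]

theorem mem_spectrum_fromBlocks_smul_self_one_zero_iff (a : K) {S : Matrix ι ι K} {z : K} :
    z ∈ spectrum K (fromBlocks (a • S) S (1 : Matrix ι ι K) 0) ↔
      ∃ μ ∈ spectrum K S, z ^ 2 = (a * z + 1) * μ := by
  have h_lin (v : ι → K) : z • (a • S) *ᵥ v + S *ᵥ v = (a * z + 1) • S *ᵥ v := by
    rw [smul_mulVec]; module
  simp only [mem_spectrum_fromBlocks_one_zero_iff, h_lin]
  constructor
  · rintro ⟨v, hv0, hv⟩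
    have hc : a * z + 1 ≠ 0 := by
      rintro hc
      rw [hc, zero_smul, smul_eq_zero] at hv
      simp_all
    refine ⟨z ^ 2 / (a * z + 1), mem_spectrum_iff_exists_mulVec_eq_smul_s9.mpr ⟨v, hv0, ?_⟩,
      (mul_div_cancel₀ _ hc).symm⟩
    rw [div_eq_inv_mul, mul_smul, hv, smul_smul, inv_mul_cancel₀ hc, one_smul]
  · rintro ⟨μ, hμ, hz⟩
    obtain ⟨v, hv0, hv⟩ := mem_spectrum_iff_exists_mulVec_eq_smul_s9.mp hμ
    exact ⟨v, hv0, by rw [hv, smul_smul, hz]⟩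

theorem nonneg_of_mem_spectrum_of_posDef_mul_eq {𝕜 : Type*} [RCLike 𝕜] {M S B : Matrix ι ι 𝕜}
    (hM : M.PosDef) (hB : B.PosSemidef) (hMS : M * S = B) {μ : 𝕜} (hμ : μ ∈ spectrum 𝕜 S) :
    0 ≤ μ := by
  obtain ⟨v, hv0, hv⟩ := mem_spectrum_iff_exists_mulVec_eq_smul_s9.mp hμ
  have hBv : star v ⬝ᵥ B *ᵥ v = μ * (star v ⬝ᵥ M *ᵥ v) := by
    rw [← hMS, ← mulVec_mulVec, hv, mulVec_smul, dotProduct_smul, smul_eq_mul]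
  have hp := hM.dotProduct_mulVec_pos hv0
  have hq := hB.dotProduct_mulVec_nonneg v
  simpa [hBv, hp.ne'] using div_nonneg hq hp.le

omit [DecidableEq ι] in
theorem map_ofReal_mul {κ : Type*} [Fintype κ] (A : Matrix κ ι ℝ) (B : Matrix ι κ ℝ) :
    (A * B).map Complex.ofReal = A.map Complex.ofReal * B.map Complex.ofReal :=
  Matrix.map_mul (f := Complex.ofRealHom)

theorem PosSemidef.map_ofReal_s9 {A : Matrix ι ι ℝ} (hA : A.PosSemidef) :
    (A.map Complex.ofReal).PosSemidef := by
  open scoped MatrixOrder in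
  obtain ⟨B, rfl⟩ := CStarAlgebra.nonneg_iff_eq_star_mul_self.mp hA.nonneg
  rw [star_eq_conjTranspose, map_ofReal_mul,
    conjTranspose_map _ fun x => (Complex.conj_ofReal x).symm]
  exact posSemidef_conjTranspose_mul_self _

theorem PosDef.map_ofReal_s9 {A : Matrix ι ι ℝ} (hA : A.PosDef) : (A.map Complex.ofReal).PosDef := by
  rw [hA.posSemidef.map_ofReal_s9.posDef_iff_det_ne_zero]
  exact (Complex.ofRealHom.map_det A).symm ▸ Complex.ofReal_ne_zero.mpr hA.det_pos.ne'

end Matrix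

theorem Complex.forall_sq_eq_norm_lt_one_iff {μ : ℂ} (hμ : 0 ≤ μ) :
    (∀ z : ℂ, z ^ 2 = (-2 * z + 1) * μ → ‖z‖ < 1) ↔ ‖μ‖ < 1 / 3 := by
  obtain ⟨t, ht, rfl⟩ : ∃ t : ℝ, 0 ≤ t ∧ μ = t :=
    ⟨μ.re, (nonneg_iff.mp hμ).1, eq_re_of_ofReal_le (by rwa [ofReal_zero])⟩
  set r := √(t ^ 2 + t)
  have hr0 : 0 ≤ r := Real.sqrt_nonneg _
  have hr : r ^ 2 = t ^ 2 + t := Real.sq_sqrt (by positivity)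
  have h_roots (z : ℂ) : z ^ 2 = (-2 * z + 1) * t ↔ z = ↑(r - t) ∨ z = ↑(-(t + r)) := by
    have hrc : (r : ℂ) ^ 2 = t ^ 2 + t := by exact_mod_cast hr
    have h_factor : z ^ 2 - (-2 * z + 1) * t = (z - ↑(r - t)) * (z - ↑(-(t + r))) := by
      push_cast
      linear_combination hrc
    rw [← sub_eq_zero, h_factor, mul_eq_zero, sub_eq_zero, sub_eq_zero]
  have h_small : |r - t| < 1 := abs_sub_lt_iff.mpr ⟨by nlinarith, by nlinarith⟩
  simp only [h_roots, or_imp, forall_and, forall_eq, norm_real, Real.norm_eq_abs, abs_neg,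
    abs_of_nonneg ht, abs_of_nonneg (add_nonneg ht hr0), true_and, h_small]
  constructor <;> intro h <;> nlinarith

theorem spectral_radius_block_lt_one_iff_general {n m : ℕ}
    (M : Matrix (Fin n) (Fin n) ℝ) (hM : M.PosDef)
    (K : Matrix (Fin m) (Fin m) ℝ) (hK : K.PosDef)
    (D : Matrix (Fin n) (Fin m) ℝ) :
    sSup ((fun z : ℂ => ‖z‖) '' spectrum ℂ
        ((Matrix.fromBlocks (-(2 : ℝ) • (M⁻¹ * D * K⁻¹ * Dᵀ)) (M⁻¹ * D * K⁻¹ * Dᵀ)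
            (1 : Matrix (Fin n) (Fin n) ℝ) 0).map Complex.ofReal)) < 1
      ↔ sSup ((fun z : ℂ => ‖z‖) '' spectrum ℂ ((M⁻¹ * D * K⁻¹ * Dᵀ).map Complex.ofReal)) < 1 / 3 := by
  set S := M⁻¹ * D * K⁻¹ * Dᵀ
  have hB : (D * K⁻¹ * Dᵀ).PosSemidef := by
    simpa using hK.posSemidef.inv.mul_mul_conjTranspose_same D
  have hMS : M * S = D * K⁻¹ * Dᵀ := by
    simp only [S, Matrix.mul_assoc,
      mul_nonsing_inv_cancel_left _ _ (M.isUnit_iff_isUnit_det.mp hM.isUnit)]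
  have hS_nonneg (μ : ℂ) (hμ : μ ∈ spectrum ℂ (S.map Complex.ofReal)) : 0 ≤ μ :=
    nonneg_of_mem_spectrum_of_posDef_mul_eq hM.map_ofReal_s9 hB.map_ofReal_s9
      (by rw [← map_ofReal_mul, hMS]) hμ
  have hN : (fromBlocks (-(2 : ℝ) • S) S (1 : Matrix (Fin n) (Fin n) ℝ) 0).map Complex.ofReal =
      fromBlocks ((-2 : ℂ) • S.map Complex.ofReal) (S.map Complex.ofReal) 1 0 := by
    rw [fromBlocks_map, map_smul' _ _ _ Complex.ofReal_mul, Complex.ofReal_neg,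
      Complex.ofReal_ofNat, Matrix.map_one _ Complex.ofReal_zero Complex.ofReal_one,
      Matrix.map_zero _ Complex.ofReal_zero]
  rw [hN, sSup_image_lt_iff_of_finite (finite_spectrum _) _ one_pos,
    sSup_image_lt_iff_of_finite (finite_spectrum _) _ (by norm_num)]
  simp only [mem_spectrum_fromBlocks_smul_self_one_zero_iff]
  constructor
  · intro h μ hμ
    exact (Complex.forall_sq_eq_norm_lt_one_iff (hS_nonneg μ hμ)).mp fun z hz => h z ⟨μ, hμ, hz⟩
  · rintro h z ⟨μ, hμ, hz⟩
    exact (Complex.forall_sq_eq_norm_lt_one_iff (hS_nonneg μ hμ)).mpr (h μ hμ) z hz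

/-- For symmetric positive definite `M`, `K` and arbitrary `D`, with `S = M⁻¹ D K⁻¹ Dᵀ` and
`N₂ = [[-2S, S], [I, 0]]`, the spectral radius of `N₂` is strictly less than `1` if and only
if the spectral radius of `S` is strictly less than `1/3`. -/
theorem spectral_radius_block_lt_one_iff {n m : ℕ} (hn : 0 < n)
    (M : Matrix (Fin n) (Fin n) ℝ) (hM : M.PosDef)
    (K : Matrix (Fin m) (Fin m) ℝ) (hK : K.PosDef)
    (D : Matrix (Fin n) (Fin m) ℝ) :
    sSup ((fun z : ℂ => ‖z‖) '' spectrum ℂ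
        ((Matrix.fromBlocks (-(2 : ℝ) • (M⁻¹ * D * K⁻¹ * Dᵀ)) (M⁻¹ * D * K⁻¹ * Dᵀ)
            (1 : Matrix (Fin n) (Fin n) ℝ) 0).map Complex.ofReal)) < 1
      ↔ sSup ((fun z : ℂ => ‖z‖) '' spectrum ℂ ((M⁻¹ * D * K⁻¹ * Dᵀ).map Complex.ofReal)) < 1 / 3 :=
  spectral_radius_block_lt_one_iff_general M hM K hK D
end

section
/- Let V and Q be real Hilbert spaces, let A : V → V be a bounded linear bijection with bounded inverse, let D : V → Q be a bounded linear map with Hilbert-space adjoint D* : Q → V, let B, C : Q → Q be bounded linear maps, and let τ > 0. Let u_n ∈ V (n ≥ 0), p_n ∈ Q (n ≥ −2), f_n ∈ V (n ≥ 0), g_n ∈ Q (n ≥ 0) satisfy, for all n ≥ 0: A u_n = D*(2p_{n−1} − p_{n−2}) + f_n, and D(3u_{n+2} − 4u_{n+1} + u_n) + C(3p_{n+2} − 4p_{n+1} + p_n) + 2τ·B p_{n+2} = 2τ·g_{n+2}. Then for all n ≥ 0: C(3p_{n+2} − 4p_{n+1} + p_n) + 2τ·B p_{n+2} + D A⁻¹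 D*(6p_{n+1} − 11p_n + 6p_{n−1} − p_{n−2}) = 2τ·g_{n+2} − D A⁻¹(3f_{n+2} − 4f_{n+1} + f_n). -/
/-!
Solving the elliptic equation for `u m` gives `u m = A⁻¹ (D* (2 p (m-1) - p (m-2)) + f m)`.
Since `A⁻¹` and `D*` are linear, the BDF-2 difference `3 u (n+2) - 4 u (n+1) + u n` is
`A⁻¹ D*` applied to the BDF-2 difference of the extrapolated pressures, which is
`6 p (n+1) - 11 p n + 6 p (n-1) - p (n-2)`, plus `A⁻¹` of the BDF-2 difference of `f`.
Substituting this into the parabolic equation leaves an equation in the pressures alone.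
-/

theorem bdf2_sub_extrapolation {M : Type*} [AddCommGroup M] [Module ℝ M] (a b c d : M) :
    (3 : ℝ) • ((2 : ℝ) • a - b) - (4 : ℝ) • ((2 : ℝ) • b - c) + ((2 : ℝ) • c - d)
      = (6 : ℝ) • a - (11 : ℝ) • b + (6 : ℝ) • c - d := by
  module

theorem bdf2_displacement_eq {V Q : Type*} [AddCommGroup V] [Module ℝ V] [TopologicalSpace V]
    [AddCommGroup Q] [Module ℝ Q] [TopologicalSpace Q]
    (A : V ≃L[ℝ] V) (S : Q →L[ℝ] V) (u f : ℕ → V) (p : ℤ → Q)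
    (hell : ∀ n : ℕ, A (u n) = S ((2 : ℝ) • p ((n : ℤ) - 1) - p ((n : ℤ) - 2)) + f n)
    (n : ℕ) :
    (3 : ℝ) • u (n + 2) - (4 : ℝ) • u (n + 1) + u n
      = A.symm (S ((6 : ℝ) • p ((n : ℤ) + 1) - (11 : ℝ) • p (n : ℤ)
          + (6 : ℝ) • p ((n : ℤ) - 1) - p ((n : ℤ) - 2))
        + ((3 : ℝ) • f (n + 2) - (4 : ℝ) • f (n + 1) + f n)) := by
  have hu (m : ℕ) := A.eq_symm_apply.mpr (hell m)
  rw [hu, hu, hu, show ((n + 2 : ℕ) : ℤ) - 1 = n + 1 by omega,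
    show ((n + 2 : ℕ) : ℤ) - 2 = n by omega, show ((n + 1 : ℕ) : ℤ) - 1 = n by omega,
    show ((n + 1 : ℕ) : ℤ) - 2 = n - 1 by omega, ← bdf2_sub_extrapolation]
  simp only [map_add, map_sub, map_smul]
  module

theorem semiexplicit_elimination_general
    {V Q : Type*} [NormedAddCommGroup V] [InnerProductSpace ℝ V] [CompleteSpace V]
    [NormedAddCommGroup Q] [InnerProductSpace ℝ Q] [CompleteSpace Q]
    (A : V ≃L[ℝ] V) (D : V →L[ℝ] Q) (B C : Q →L[ℝ] Q) (τ : ℝ)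
    (u f : ℕ → V) (p : ℤ → Q) (g : ℕ → Q)
    (hell : ∀ n : ℕ,
      A (u n) = (ContinuousLinearMap.adjoint D) ((2 : ℝ) • p ((n : ℤ) - 1) - p ((n : ℤ) - 2))
        + f n)
    (hpar : ∀ n : ℕ,
      D ((3 : ℝ) • u (n + 2) - (4 : ℝ) • u (n + 1) + u n)
        + C ((3 : ℝ) • p ((n : ℤ) + 2) - (4 : ℝ) • p ((n : ℤ) + 1) + p (n : ℤ))
        + (2 * τ) • B (p ((n : ℤ) + 2))
      = (2 * τ) • g (n + 2)) :
    ∀ n : ℕ,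
      C ((3 : ℝ) • p ((n : ℤ) + 2) - (4 : ℝ) • p ((n : ℤ) + 1) + p (n : ℤ))
        + (2 * τ) • B (p ((n : ℤ) + 2))
        + D (A.symm ((ContinuousLinearMap.adjoint D)
            ((6 : ℝ) • p ((n : ℤ) + 1) - (11 : ℝ) • p (n : ℤ) + (6 : ℝ) • p ((n : ℤ) - 1)
              - p ((n : ℤ) - 2))))
      = (2 * τ) • g (n + 2)
        - D (A.symm ((3 : ℝ) • f (n + 2) - (4 : ℝ) • f (n + 1) + f n)) := by
  intro n
  have h := hpar n
  rw [bdf2_displacement_eq A (ContinuousLinearMap.adjoint D) u f p hell n, map_add, map_add] at h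
  rw [← h]
  abel

/-- Operator-level elimination identity of Section 3.4: eliminating the displacement iterates
from the semi-explicit second-order scheme yields the BDF-2 discretization of a parabolic
equation with two delays in the pressure variable alone. -/
theorem semiexplicit_elimination
    {V Q : Type*} [NormedAddCommGroup V] [InnerProductSpace ℝ V] [CompleteSpace V]
    [NormedAddCommGroup Q] [InnerProductSpace ℝ Q] [CompleteSpace Q]
    (A : V ≃L[ℝ] V) (D : V →L[ℝ] Q) (B C : Q →L[ℝ] Q) (τ : ℝ) (hτ : 0 < τ)
    (u f : ℕ → V) (p : ℤ → Q) (g : ℕ → Q)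
    (hell : ∀ n : ℕ,
      A (u n) = (ContinuousLinearMap.adjoint D) ((2 : ℝ) • p ((n : ℤ) - 1) - p ((n : ℤ) - 2))
        + f n)
    (hpar : ∀ n : ℕ,
      D ((3 : ℝ) • u (n + 2) - (4 : ℝ) • u (n + 1) + u n)
        + C ((3 : ℝ) • p ((n : ℤ) + 2) - (4 : ℝ) • p ((n : ℤ) + 1) + p (n : ℤ))
        + (2 * τ) • B (p ((n : ℤ) + 2))
      = (2 * τ) • g (n + 2)) :
    ∀ n : ℕ,
      C ((3 : ℝ) • p ((n : ℤ) + 2) - (4 : ℝ) • p ((n : ℤ) + 1) + p (n : ℤ))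
        + (2 * τ) • B (p ((n : ℤ) + 2))
        + D (A.symm ((ContinuousLinearMap.adjoint D)
            ((6 : ℝ) • p ((n : ℤ) + 1) - (11 : ℝ) • p (n : ℤ) + (6 : ℝ) • p ((n : ℤ) - 1)
              - p ((n : ℤ) - 2))))
      = (2 * τ) • g (n + 2)
        - D (A.symm ((3 : ℝ) • f (n + 2) - (4 : ℝ) • f (n + 1) + f n)) :=
  semiexplicit_elimination_general A D B C τ u f p g hell hpar
end

section
/- Let H be a real Hilbert space, let b : H × H → ℝ be a symmetric bilinear form with b(x,x) ≥ 0 for all x, and let c̃ : H × H → ℝ be a symmetric bilinear form with 0 ≤ c̃(x,x) ≤ ω‖x‖² for all x, where 0 ≤ ω ≤ 1/5. Let 0 < τ ≤ 1, let e_n ∈ H for integers n ≥ −2 with e_{−2} = e_{−1} = e_0 = 0, and let d_n ∈ H for n ≥ 2. Assume that for all n ≥ 0 and all q ∈ H: ⟨3e_{n+2} − 4e_{n+1} + e_n, q⟩ + 2τ·b(e_{n+2}, q) + 2·c̃(3e_{n+1} − 4e_n + e_{n−1}, q) − c̃(3e_n − 4e_{n−1} + e_{n−2}, q) = 2τ·⟨d_{n+2},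 q⟩. Then for all n ≥ 2: Σ_{j=2}^{n} ‖e_j − e_{j−1}‖² + 2τ·Σ_{j=2}^{n} b(e_j − e_{j−1}, e_j − e_{j−1}) + ‖e_n − e_{n−1}‖² + 2τ·b(e_n, e_n) ≤ 4τ·Σ_{j=2}^{n} ‖d_j‖² + 2‖e_1‖² + 2τ·b(e_1, e_1). -/
/-!
Test the error equation at step `n + 2` with `q = e (n + 2) - e (n + 1)` and write
`δ j = e j - e (j - 1)`. The BDF-2 term satisfies
`2 ⟪3 x - y, x⟫ = 5 ‖x‖² - ‖y‖² + ‖x - y‖²`, the `b`-term is a difference `b e e` at two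
consecutive steps plus `b δ δ`, and the four coupling terms are absorbed by Young's inequality
for the semidefinite form `c̃` together with `c̃ z z ≤ ‖z‖² / 5`. What is left is the per-step
inequality `17/25 ‖δ j‖² + τ b (δ j) (δ j) + E j - E (j - 1) ≤ 2 τ ‖d j‖²` for a discrete
energy `E`, which telescopes when summed over `j`.
-/

open scoped RealInnerProductSpace
open Finset

theorem sum_Icc_add_sub_le_sum {a r Φ : ℕ → ℝ} {m n : ℕ} (hmn : m ≤ n)
    (h : ∀ j ∈ Icc (m + 1) n, a j + (Φ j - Φ (j - 1)) ≤ r j) :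
    ∑ j ∈ Icc (m + 1) n, a j + (Φ n - Φ m) ≤ ∑ j ∈ Icc (m + 1) n, r j := by
  induction n, hmn using Nat.le_induction with
  | base => simp
  | succ n hmn ih =>
    rw [sum_Icc_succ_top (by omega), sum_Icc_succ_top (by omega)]
    have hn := h (n + 1) (by simp; omega)
    have ih := ih fun j hj ↦ h j (by simp at hj ⊢; omega)
    simp only [Nat.add_sub_cancel] at hn
    linarith

namespace LinearMap

variable {M : Type*} [AddCommGroup M] [Module ℝ M]

theorem two_mul_apply_sub_eq (b : M →ₗ[ℝ] M →ₗ[ℝ] ℝ) (hb : ∀ x y, b x y = b y x) (p p' : M) :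
    2 * b p (p - p') = b p p - b p' p' + b (p - p') (p - p') := by
  simp only [map_sub, sub_apply, hb p' p]
  ring

theorem two_mul_mul_apply_le (c : M →ₗ[ℝ] M →ₗ[ℝ] ℝ) (hc : ∀ x y, c x y = c y x)
    (hc0 : ∀ x, 0 ≤ c x x) (s : ℝ) (x y : M) :
    2 * s * c x y ≤ s ^ 2 * c x x + c y y := by
  have h := hc0 (s • x - y)
  simp only [map_sub, map_smul, sub_apply, smul_apply, smul_eq_mul, hc y x] at h
  nlinarith

/-- The Young parameters `5/6`, `2/3`, `-2/3` are chosen so that, once `c z z ≤ ‖z‖² / 5`,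
the `c (x - y) (x - y)` term is cancelled exactly by the `‖x - y‖²` of the BDF-2 identity. -/
theorem bdf2_coupling_lower_bound (c : M →ₗ[ℝ] M →ₗ[ℝ] ℝ) (hc : ∀ x y, c x y = c y x)
    (hc0 : ∀ x, 0 ≤ c x x) (x y u v : M) :
    -(21 / 10 * c x x + 5 / 2 * c (x - y) (x - y) + 5 / 3 * c u u + 1 / 3 * c v v)
      ≤ 2 * c ((3 : ℝ) • y - u) x - c ((3 : ℝ) • u - v) x := by
  have hxy := two_mul_mul_apply_le c hc hc0 (5 / 6) (x - y) x
  have hux := two_mul_mul_apply_le c hc hc0 (2 / 3) u x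
  have hvx := two_mul_mul_apply_le c hc hc0 (-2 / 3) v x
  simp only [map_sub, map_smul, sub_apply, smul_apply, smul_eq_mul] at hxy ⊢
  linarith

end LinearMap

section BDF2

variable {H : Type*} [NormedAddCommGroup H] [InnerProductSpace ℝ H]

theorem two_mul_real_inner_three_smul_sub_self (x y : H) :
    2 * ⟪(3 : ℝ) • x - y, x⟫ = 5 * ‖x‖ ^ 2 - ‖y‖ ^ 2 + ‖x - y‖ ^ 2 := by
  rw [norm_sub_sq_real, inner_sub_left, real_inner_smul_left, real_inner_self_eq_norm_sq,
    real_inner_comm]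
  ring

theorem real_inner_le_norm_sq_add_norm_sq_div_four (x y : H) :
    ⟪x, y⟫ ≤ ‖x‖ ^ 2 + ‖y‖ ^ 2 / 4 := by
  nlinarith [real_inner_le_norm x y, sq_nonneg (2 * ‖x‖ - ‖y‖)]

/-- The weights are the tail sums of the coefficients `1/2, 1/3, 1/15` of the backward
differences in the per-step estimate, so that `bdf2DelayEnergy` telescopes. -/
noncomputable def bdf2DelayEnergy (b : H →ₗ[ℝ] H →ₗ[ℝ] ℝ) (τ : ℝ) (e : ℤ → H) (n : ℤ) : ℝ :=
  9 / 10 * ‖e n - e (n - 1)‖ ^ 2 + 2 / 5 * ‖e (n - 1) - e (n - 2)‖ ^ 2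
    + 1 / 15 * ‖e (n - 2) - e (n - 3)‖ ^ 2 + τ * b (e n) (e n)

theorem bdf2DelayEnergy_step (b c : H →ₗ[ℝ] H →ₗ[ℝ] ℝ)
    (hb : ∀ x y, b x y = b y x) (hc : ∀ x y, c x y = c y x) (hc0 : ∀ x, 0 ≤ c x x)
    (hc1 : ∀ x, c x x ≤ ‖x‖ ^ 2 / 5) {τ : ℝ} (hτ0 : 0 ≤ τ) (hτ1 : τ ≤ 1)
    (e : ℤ → H) (n : ℤ) (r : H)
    (h : ⟪(3 : ℝ) • e (n + 2) - (4 : ℝ) • e (n + 1) + e n, e (n + 2) - e (n + 1)⟫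
        + 2 * τ * b (e (n + 2)) (e (n + 2) - e (n + 1))
        + 2 * c ((3 : ℝ) • e (n + 1) - (4 : ℝ) • e n + e (n - 1)) (e (n + 2) - e (n + 1))
        - c ((3 : ℝ) • e n - (4 : ℝ) • e (n - 1) + e (n - 2)) (e (n + 2) - e (n + 1))
      = 2 * τ * ⟪r, e (n + 2) - e (n + 1)⟫) :
    17 / 25 * ‖e (n + 2) - e (n + 1)‖ ^ 2
        + τ * b (e (n + 2) - e (n + 1)) (e (n + 2) - e (n + 1))
        + (bdf2DelayEnergy b τ e (n + 2) - bdf2DelayEnergy b τ e (n + 1))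
      ≤ 2 * τ * ‖r‖ ^ 2 := by
  set x := e (n + 2) - e (n + 1)
  set y := e (n + 1) - e n
  set u := e n - e (n - 1)
  set v := e (n - 1) - e (n - 2)
  have hx : (3 : ℝ) • e (n + 2) - (4 : ℝ) • e (n + 1) + e n = (3 : ℝ) • x - y := by module
  have hy : (3 : ℝ) • e (n + 1) - (4 : ℝ) • e n + e (n - 1) = (3 : ℝ) • y - u := by module
  have hu : (3 : ℝ) • e n - (4 : ℝ) • e (n - 1) + e (n - 2) = (3 : ℝ) • u - v := by module
  rw [hx, hy, hu] at h
  have hE : bdf2DelayEnergy b τ e (n + 2) - bdf2DelayEnergy b τ e (n + 1)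
      = 9 / 10 * ‖x‖ ^ 2 - 1 / 2 * ‖y‖ ^ 2 - 1 / 3 * ‖u‖ ^ 2 - 1 / 15 * ‖v‖ ^ 2
        + τ * (b (e (n + 2)) (e (n + 2)) - b (e (n + 1)) (e (n + 1))) := by
    simp only [bdf2DelayEnergy, show n + 2 - 1 = n + 1 by ring, show n + 2 - 2 = n by ring,
      show n + 2 - 3 = n - 1 by ring, show n + 1 - 1 = n by ring, show n + 1 - 2 = n - 1 by ring,
      show n + 1 - 3 = n - 2 by ring]
    ring
  have hinertia := two_mul_real_inner_three_smul_sub_self x y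
  have hbdiff : τ * (2 * b (e (n + 2)) x)
      = τ * (b (e (n + 2)) (e (n + 2)) - b (e (n + 1)) (e (n + 1)) + b x x) :=
    congrArg (τ * ·) (LinearMap.two_mul_apply_sub_eq b hb _ _)
  have hcoupling := LinearMap.bdf2_coupling_lower_bound c hc hc0 x y u v
  have hrhs := mul_le_mul_of_nonneg_left (real_inner_le_norm_sq_add_norm_sq_div_four r x) hτ0
  have hτx := mul_le_mul_of_nonneg_right hτ1 (sq_nonneg ‖x‖)
  linarith [hc1 x, hc1 (x - y), hc1 u, hc1 v]

end BDF2

theorem bdf2_delay_difference_estimate_general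
    {H : Type*} [NormedAddCommGroup H] [InnerProductSpace ℝ H]
    (b ctil : H →ₗ[ℝ] H →ₗ[ℝ] ℝ)
    (hbsymm : ∀ x y, b x y = b y x)
    (hcsymm : ∀ x y, ctil x y = ctil y x)
    (ω : ℝ) (hω : ω ≤ 1 / 5)
    (hc : ∀ x, 0 ≤ ctil x x ∧ ctil x x ≤ ω * ‖x‖ ^ 2)
    (τ : ℝ) (hτ0 : 0 < τ) (hτ1 : τ ≤ 1)
    (e : ℤ → H) (hem2 : e (-2) = 0) (hem1 : e (-1) = 0) (he0 : e 0 = 0)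
    (d : ℕ → H)
    (heq : ∀ (n : ℕ) (q : H),
      ⟪(3 : ℝ) • e ((n : ℤ) + 2) - (4 : ℝ) • e ((n : ℤ) + 1) + e (n : ℤ), q⟫
        + 2 * τ * b (e ((n : ℤ) + 2)) q
        + 2 * ctil ((3 : ℝ) • e ((n : ℤ) + 1) - (4 : ℝ) • e (n : ℤ) + e ((n : ℤ) - 1)) q
        - ctil ((3 : ℝ) • e (n : ℤ) - (4 : ℝ) • e ((n : ℤ) - 1) + e ((n : ℤ) - 2)) q
      = 2 * τ * ⟪d (n + 2), q⟫) :
    ∀ n : ℕ, 2 ≤ n →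
      (∑ j ∈ Finset.Icc 2 n, ‖e (j : ℤ) - e ((j : ℤ) - 1)‖ ^ 2)
        + 2 * τ * (∑ j ∈ Finset.Icc 2 n,
            b (e (j : ℤ) - e ((j : ℤ) - 1)) (e (j : ℤ) - e ((j : ℤ) - 1)))
        + ‖e (n : ℤ) - e ((n : ℤ) - 1)‖ ^ 2 + 2 * τ * b (e (n : ℤ)) (e (n : ℤ))
      ≤ 4 * τ * (∑ j ∈ Finset.Icc 2 n, ‖d j‖ ^ 2) + 2 * ‖e 1‖ ^ 2 + 2 * τ * b (e 1) (e 1) := by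
  intro n hn
  have hc1 (x : H) : ctil x x ≤ ‖x‖ ^ 2 / 5 := by
    linarith [(hc x).2, mul_le_mul_of_nonneg_right hω (sq_nonneg ‖x‖)]
  have hstep : ∀ j ∈ Icc 2 n,
      (17 / 25 * ‖e (j : ℤ) - e ((j : ℤ) - 1)‖ ^ 2
          + τ * b (e (j : ℤ) - e ((j : ℤ) - 1)) (e (j : ℤ) - e ((j : ℤ) - 1)))
        + (bdf2DelayEnergy b τ e j - bdf2DelayEnergy b τ e (j - 1 : ℕ))
      ≤ 2 * τ * ‖d j‖ ^ 2 := by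
    intro j hj
    obtain ⟨m, rfl⟩ : ∃ m, j = m + 2 := ⟨j - 2, by simp at hj; omega⟩
    have h := bdf2DelayEnergy_step b ctil hbsymm hcsymm (fun x ↦ (hc x).1) hc1 hτ0.le hτ1 e m
      (d (m + 2)) (heq m _)
    push_cast [Nat.add_sub_cancel]
    rwa [show (m : ℤ) + 2 - 1 = m + 1 by ring]
  have hsum := sum_Icc_add_sub_le_sum (m := 1) (by omega) hstep
  rw [show 1 + 1 = 2 from rfl, sum_add_distrib, ← mul_sum, ← mul_sum, ← mul_sum] at hsum
  have hE1 : bdf2DelayEnergy b τ e (1 : ℕ) = 9 / 10 * ‖e 1‖ ^ 2 + τ * b (e 1) (e 1) := by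
    norm_num [bdf2DelayEnergy, he0, hem1, hem2]
  have hEn : 9 / 10 * ‖e (n : ℤ) - e ((n : ℤ) - 1)‖ ^ 2 + τ * b (e (n : ℤ)) (e (n : ℤ))
      ≤ bdf2DelayEnergy b τ e n := by
    unfold bdf2DelayEnergy
    linarith [sq_nonneg ‖e ((n : ℤ) - 1) - e ((n : ℤ) - 2)‖,
      sq_nonneg ‖e ((n : ℤ) - 2) - e ((n : ℤ) - 3)‖]
  have hS : 0 ≤ ∑ j ∈ Icc 2 n, ‖e (j : ℤ) - e ((j : ℤ) - 1)‖ ^ 2 :=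
    sum_nonneg fun j _ ↦ sq_nonneg _
  linarith [sq_nonneg ‖e 1‖, sq_nonneg ‖e (n : ℤ) - e ((n : ℤ) - 1)‖]

/-- Step 1 of the proof of Theorem 4.2: auxiliary estimate for the differences of the errors
of the BDF-2 discretization of the neutral delay equation, under the weak coupling
condition `ω ≤ 1/5`. -/
theorem bdf2_delay_difference_estimate
    {H : Type*} [NormedAddCommGroup H] [InnerProductSpace ℝ H] [CompleteSpace H]
    (b ctil : H →ₗ[ℝ] H →ₗ[ℝ] ℝ)
    (hbsymm : ∀ x y, b x y = b y x) (hbpos : ∀ x, 0 ≤ b x x)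
    (hcsymm : ∀ x y, ctil x y = ctil y x)
    (ω : ℝ) (hω0 : 0 ≤ ω) (hω : ω ≤ 1 / 5)
    (hc : ∀ x, 0 ≤ ctil x x ∧ ctil x x ≤ ω * ‖x‖ ^ 2)
    (τ : ℝ) (hτ0 : 0 < τ) (hτ1 : τ ≤ 1)
    (e : ℤ → H) (hem2 : e (-2) = 0) (hem1 : e (-1) = 0) (he0 : e 0 = 0)
    (d : ℕ → H)
    (heq : ∀ (n : ℕ) (q : H),
      ⟪(3 : ℝ) • e ((n : ℤ) + 2) - (4 : ℝ) • e ((n : ℤ) + 1) + e (n : ℤ), q⟫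
        + 2 * τ * b (e ((n : ℤ) + 2)) q
        + 2 * ctil ((3 : ℝ) • e ((n : ℤ) + 1) - (4 : ℝ) • e (n : ℤ) + e ((n : ℤ) - 1)) q
        - ctil ((3 : ℝ) • e (n : ℤ) - (4 : ℝ) • e ((n : ℤ) - 1) + e ((n : ℤ) - 2)) q
      = 2 * τ * ⟪d (n + 2), q⟫) :
    ∀ n : ℕ, 2 ≤ n →
      (∑ j ∈ Finset.Icc 2 n, ‖e (j : ℤ) - e ((j : ℤ) - 1)‖ ^ 2)
        + 2 * τ * (∑ j ∈ Finset.Icc 2 n,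
            b (e (j : ℤ) - e ((j : ℤ) - 1)) (e (j : ℤ) - e ((j : ℤ) - 1)))
        + ‖e (n : ℤ) - e ((n : ℤ) - 1)‖ ^ 2 + 2 * τ * b (e (n : ℤ)) (e (n : ℤ))
      ≤ 4 * τ * (∑ j ∈ Finset.Icc 2 n, ‖d j‖ ^ 2) + 2 * ‖e 1‖ ^ 2 + 2 * τ * b (e 1) (e 1) :=
  bdf2_delay_difference_estimate_general b ctil hbsymm hcsymm ω hω hc τ hτ0 hτ1 e hem2 hem1 he0 d
    heq
end

section
/- Let H be a real Hilbert space, let b : H × H → ℝ be a symmetric bilinear form with b(x,x) ≥ β‖x‖² for all x and some β > 0, and let c̃ : H × H → ℝ be a symmetric bilinear form with 0 ≤ c̃(x,x) ≤ ω‖x‖² for all x, where 0 ≤ ω ≤ 1/5. Let 0 < τ ≤ 1, let e_n ∈ H for integers n ≥ −2 with e_{−2} = e_{−1} = e_0 = 0, and let d_n ∈ H for n ≥ 2. Assume that for all n ≥ 0 and all q ∈ H: ⟨3e_{n+2} − 4e_{n+1} + e_n, q⟩ + 2τ·b(e_{n+2}, q) + 2·c̃(3e_{n+1} − 4e_n +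 e_{n−1}, q) − c̃(3e_n − 4e_{n−1} + e_{n−2}, q) = 2τ·⟨d_{n+2}, q⟩. Then there exists a constant C > 0, depending only on β, such that for all n ≥ 2: ‖e_n‖² + τ·Σ_{j=2}^{n} b(e_j, e_j) ≤ C·( τ·Σ_{j=2}^{n} ‖d_j‖² + ‖e_1‖² + τ·b(e_1, e_1) ). -/
/-!
Write `D_k = 3e_k - 4e_{k-1} + e_{k-2}` and `∇e_k = e_k - e_{k-1}`. For a symmetric
form `φ`, Dahlquist's G-stability identity for BDF-2,
  `2 φ(D_k, e_k) = G_φ(k) - G_φ(k-1) + φ(e_k - 2e_{k-1} + e_{k-2})`,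
  `G_φ(k) = φ(e_k, e_k) + φ(2e_k - e_{k-1}, 2e_k - e_{k-1})`,
makes the principal part of the recursion telescope when it is tested with `e_m`. The delay terms
`2c̃(D_{m-1}, e_m) - c̃(D_{m-2}, e_m)` split into `c̃(D_k, e_k)`, which telescope by the same identity
for `c̃`, and cross terms against `∇e_m`. Testing with `D_m` instead bounds `Σ ‖D_m‖²` (this is where
`ω ≤ 1/5` lets the coupling be absorbed), and `D_k = 3∇e_k - ∇e_{k-1}` gives
`Σ ‖∇e_k‖² ≤ 2/5 Σ ‖D_k‖²`. The one delay term left over, `G_c̃(N-2)/2`, is at most a fifth of the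
energy two steps earlier, so the energy inequality closes by induction in steps of two.
-/

open scoped RealInnerProductSpace
open Finset

universe u

section Sums

lemma sum_Icc_sub_sub_one {M : Type*} [AddCommGroup M] (f : ℤ → M) {a N : ℕ} (h : a ≤ N) :
    ∑ m ∈ Icc a N, (f m - f (m - 1)) = f N - f (a - 1) := by
  simpa using sum_Icc_sub h (fun i : ℕ => f ((i : ℤ) - 1))

lemma sum_Icc_add_sub_le {x y : ℕ → ℝ} {E : ℤ → ℝ} {a N : ℕ} (h : a ≤ N)
    (hstep : ∀ m ∈ Icc a N, x m + (E m - E (m - 1)) ≤ y m) :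
    ∑ m ∈ Icc a N, x m + (E N - E (a - 1)) ≤ ∑ m ∈ Icc a N, y m := by
  rw [← sum_Icc_sub_sub_one E h, ← sum_add_distrib]
  exact sum_le_sum hstep

lemma sum_Icc_eq_add_sum_Icc_add_one {M : Type*} [AddCommMonoid M] (f : ℕ → M) {a N : ℕ}
    (h : a ≤ N) : ∑ m ∈ Icc a N, f m = f a + ∑ m ∈ Icc (a + 1) N, f m := by
  rw [Icc_add_one_left_eq_Ioc, add_sum_Ioc_eq_sum_Icc h]

lemma sum_Icc_sub_one_le {f : ℤ → ℝ} (hf : ∀ k, 0 ≤ f k) (a N : ℕ) :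
    ∑ m ∈ Icc (a + 1) N, f (m - 1) ≤ ∑ m ∈ Icc a N, f m := by
  rcases lt_or_ge N (a + 1) with hN | hN
  · rw [Icc_eq_empty (by omega), sum_empty]
    exact sum_nonneg fun k _ => hf k
  have htel := sum_Icc_sub_sub_one f hN
  rw [sum_sub_distrib, Nat.cast_add, Nat.cast_one, add_sub_cancel_right] at htel
  rw [sum_Icc_eq_add_sum_Icc_add_one _ (by omega : a ≤ N)]
  linarith [hf N]

lemma le_mul_of_le_two_step {x r : ℕ → ℝ} {q K M : ℝ} (hr : Monotone r) (hr₀ : 0 ≤ r 0)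
    (hq : 0 ≤ q) (hM : 0 ≤ M) (hqKM : q * M + K ≤ M) (h₀₁ : ∀ N < 2, x N ≤ M * r N)
    (hx : ∀ N, 2 ≤ N → x N ≤ q * x (N - 2) + K * r N) (N : ℕ) : x N ≤ M * r N := by
  induction N using Nat.strong_induction_on with
  | _ N ih =>
    rcases lt_or_ge N 2 with hN | hN
    · exact h₀₁ N hN
    have hrN : 0 ≤ r N := hr₀.trans (hr (Nat.zero_le N))
    calc x N ≤ q * x (N - 2) + K * r N := hx N hN
      _ ≤ q * (M * r N) + K * r N := by
        gcongr
        exact (ih _ (by omega)).trans (mul_le_mul_of_nonneg_left (hr (by omega)) hM)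
      _ = (q * M + K) * r N := by ring
      _ ≤ M * r N := by gcongr

end Sums

section BDF2

variable {E : Type*} [AddCommGroup E] [Module ℝ E]

def bwdDiff (e : ℤ → E) (k : ℤ) : E := e k - e (k - 1)

def bdf2Diff (e : ℤ → E) (k : ℤ) : E := (3 : ℝ) • e k - (4 : ℝ) • e (k - 1) + e (k - 2)

/-- Dahlquist's G-norm `G_φ(k)` of BDF-2. -/
def bdf2Energy (φ : E →ₗ[ℝ] E →ₗ[ℝ] ℝ) (e : ℤ → E) (k : ℤ) : ℝ :=
  φ (e k) (e k) + φ ((2 : ℝ) • e k - e (k - 1)) ((2 : ℝ) • e k - e (k - 1))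

lemma bdf2Diff_eq_bwdDiff (e : ℤ → E) (k : ℤ) :
    bdf2Diff e k = (3 : ℝ) • bwdDiff e k - bwdDiff e (k - 1) := by
  rw [bdf2Diff, bwdDiff, bwdDiff, sub_sub, one_add_one_eq_two]
  module

variable {φ : E →ₗ[ℝ] E →ₗ[ℝ] ℝ}

namespace LinearMap

lemma IsPosSemidef.two_mul_abs_le (hφ : φ.IsPosSemidef) (x y : E) :
    2 * |φ x y| ≤ φ x x + φ y y := by
  have hsymm : φ y x = φ x y := (hφ.eq x y).symm
  have hadd := hφ.nonneg (x + y)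
  have hsub := hφ.nonneg (x - y)
  simp only [map_add, map_sub, add_apply, sub_apply, hsymm] at hadd hsub
  rcases abs_cases (φ x y) with ⟨habs, -⟩ | ⟨habs, -⟩ <;> linarith

lemma IsPosSemidef.apply_self_le_bdf2Energy (hφ : φ.IsPosSemidef) (e : ℤ → E) (k : ℤ) :
    φ (e k) (e k) ≤ bdf2Energy φ e k :=
  le_add_of_nonneg_right (hφ.nonneg _)

lemma IsPosSemidef.bdf2Energy_nonneg (hφ : φ.IsPosSemidef) (e : ℤ → E) (k : ℤ) :
    0 ≤ bdf2Energy φ e k :=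
  (hφ.nonneg _).trans (hφ.apply_self_le_bdf2Energy e k)

lemma IsSymm.two_mul_apply_bdf2Diff (hφ : φ.IsSymm) (e : ℤ → E) (k : ℤ) :
    2 * φ (bdf2Diff e k) (e k) = bdf2Energy φ e k - bdf2Energy φ e (k - 1)
      + φ (e k - (2 : ℝ) • e (k - 1) + e (k - 2)) (e k - (2 : ℝ) • e (k - 1) + e (k - 2)) := by
  simp only [bdf2Diff, bdf2Energy, sub_sub, one_add_one_eq_two]
  have h₁ := hφ.eq (e k) (e (k - 1))
  have h₂ := hφ.eq (e k) (e (k - 2))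
  simp only [RingHom.id_apply] at h₁ h₂
  simp only [map_add, map_sub, map_smul, add_apply, sub_apply, smul_apply, smul_eq_mul]
  linear_combination (4 : ℝ) * h₁ - h₂

lemma IsPosSemidef.bdf2Energy_sub_le (hφ : φ.IsPosSemidef) (e : ℤ → E) (k : ℤ) :
    bdf2Energy φ e k - bdf2Energy φ e (k - 1) ≤ 2 * φ (bdf2Diff e k) (e k) := by
  rw [hφ.isSymm.two_mul_apply_bdf2Diff]
  exact le_add_of_nonneg_right (hφ.nonneg _)

end LinearMap

end BDF2

section Increments

variable {E : Type*} [SeminormedAddCommGroup E] [NormedSpace ℝ E]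

lemma norm_bwdDiff_sq_le (e : ℤ → E) (k : ℤ) :
    ‖bwdDiff e k‖ ^ 2 ≤ ‖bwdDiff e (k - 1)‖ ^ 2 / 6 + ‖bdf2Diff e k‖ ^ 2 / 3 := by
  have htri : 3 * ‖bwdDiff e k‖ ≤ ‖bdf2Diff e k‖ + ‖bwdDiff e (k - 1)‖ :=
    calc 3 * ‖bwdDiff e k‖ = ‖bdf2Diff e k + bwdDiff e (k - 1)‖ := by
          rw [bdf2Diff_eq_bwdDiff, sub_add_cancel, norm_smul, Real.norm_ofNat]
      _ ≤ _ := norm_add_le _ _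
  nlinarith [norm_nonneg (bwdDiff e k), sq_nonneg (2 * ‖bdf2Diff e k‖ - ‖bwdDiff e (k - 1)‖)]

lemma sum_norm_bwdDiff_sq_le (e : ℤ → E) (he : bwdDiff e 0 = 0) {N : ℕ} (hN : 1 ≤ N) :
    ∑ k ∈ Icc 1 N, ‖bwdDiff e k‖ ^ 2 ≤ 2 / 5 * ∑ k ∈ Icc 1 N, ‖bdf2Diff e k‖ ^ 2 := by
  have hsum := sum_Icc_add_sub_le (x := fun k => 5 / 6 * ‖bwdDiff e k‖ ^ 2)
    (E := fun k => ‖bwdDiff e k‖ ^ 2 / 6) (y := fun k => ‖bdf2Diff e k‖ ^ 2 / 3) hN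
    (fun k _ => by linarith [norm_bwdDiff_sq_le e k])
  simp only [← mul_sum, ← sum_div, Nat.cast_one, sub_self, he, norm_zero] at hsum
  nlinarith [norm_nonneg (bwdDiff e N)]

end Increments

section ErrorRecursion

variable {H : Type*} [NormedAddCommGroup H] [InnerProductSpace ℝ H]

/-- `c_le` is the weak coupling condition, with `ω` replaced by its bound `1/5`. -/
structure IsBDF2DelayError (β τ : ℝ) (b c : H →ₗ[ℝ] H →ₗ[ℝ] ℝ) (e : ℤ → H) (d : ℕ → H) :
    Prop where
  β_pos : 0 < β
  b_isSymm : b.IsSymm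
  b_coercive : ∀ x, β * ‖x‖ ^ 2 ≤ b x x
  c_isPosSemidef : c.IsPosSemidef
  c_le : ∀ x, c x x ≤ ‖x‖ ^ 2 / 5
  τ_pos : 0 < τ
  τ_le_one : τ ≤ 1
  e_neg_two : e (-2) = 0
  e_neg_one : e (-1) = 0
  e_zero : e 0 = 0
  error_eq : ∀ m : ℕ, 2 ≤ m → ∀ q : H,
    ⟪bdf2Diff e m, q⟫ + 2 * τ * b (e m) q + 2 * c (bdf2Diff e (m - 1)) q
      - c (bdf2Diff e (m - 2)) q = 2 * τ * ⟪d m, q⟫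

noncomputable def dataSize (τ : ℝ) (b : H →ₗ[ℝ] H →ₗ[ℝ] ℝ) (e : ℤ → H) (d : ℕ → H) (N : ℕ) :
    ℝ :=
  τ * ∑ j ∈ Icc 2 N, ‖d j‖ ^ 2 + ‖e 1‖ ^ 2 + τ * b (e 1) (e 1)

noncomputable def errorEnergy (τ : ℝ) (b : H →ₗ[ℝ] H →ₗ[ℝ] ℝ) (e : ℤ → H) (N : ℕ) : ℝ :=
  bdf2Energy (innerₗ H) e N / 2 + τ * ∑ m ∈ Icc 2 N, b (e m) (e m)

/-- What telescopes when the recursion is tested with `e_m`: the last two terms take up the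
telescoping part of the delay terms. -/
noncomputable def modifiedEnergy (c : H →ₗ[ℝ] H →ₗ[ℝ] ℝ) (e : ℤ → H) (k : ℤ) : ℝ :=
  bdf2Energy (innerₗ H) e k / 2 + c (bdf2Diff e (k - 1)) (e (k - 1)) + bdf2Energy c e (k - 1) / 2

namespace IsBDF2DelayError

variable {β τ : ℝ} {b c : H →ₗ[ℝ] H →ₗ[ℝ] ℝ} {e : ℤ → H} {d : ℕ → H}

lemma b_isPosSemidef (h : IsBDF2DelayError β τ b c e d) : b.IsPosSemidef where
  isSymm := h.b_isSymm
  nonneg x := by nlinarith [h.b_coercive x, h.β_pos, sq_nonneg ‖x‖]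

lemma two_mul_abs_c_le (h : IsBDF2DelayError β τ b c e d) (x y : H) :
    2 * |c x y| ≤ (‖x‖ ^ 2 + ‖y‖ ^ 2) / 5 := by
  linarith [h.c_isPosSemidef.two_mul_abs_le x y, h.c_le x, h.c_le y]

lemma bdf2Energy_c_le (h : IsBDF2DelayError β τ b c e d) (k : ℤ) :
    bdf2Energy c e k ≤ bdf2Energy (innerₗ H) e k / 5 := by
  simp only [bdf2Energy, innerₗ_apply_apply, real_inner_self_eq_norm_sq]
  linarith [h.c_le (e k), h.c_le ((2 : ℝ) • e k - e (k - 1))]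

lemma bdf2Diff_zero (h : IsBDF2DelayError β τ b c e d) : bdf2Diff e 0 = 0 := by
  simp [bdf2Diff, h.e_zero, h.e_neg_one, h.e_neg_two]

lemma bdf2Diff_one (h : IsBDF2DelayError β τ b c e d) : bdf2Diff e 1 = (3 : ℝ) • e 1 := by
  simp [bdf2Diff, h.e_zero, h.e_neg_one]

lemma bwdDiff_zero (h : IsBDF2DelayError β τ b c e d) : bwdDiff e 0 = 0 := by
  simp [bwdDiff, h.e_zero, h.e_neg_one]

lemma bdf2Energy_zero (h : IsBDF2DelayError β τ b c e d) (φ : H →ₗ[ℝ] H →ₗ[ℝ] ℝ) :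
    bdf2Energy φ e 0 = 0 := by
  simp [bdf2Energy, h.e_zero, h.e_neg_one]

lemma bdf2Energy_one (h : IsBDF2DelayError β τ b c e d) (φ : H →ₗ[ℝ] H →ₗ[ℝ] ℝ) :
    bdf2Energy φ e 1 = 5 * φ (e 1) (e 1) := by
  simp only [bdf2Energy, sub_self, h.e_zero, sub_zero, map_smul, LinearMap.smul_apply,
    smul_eq_mul]
  ring

lemma dataSize_nonneg (h : IsBDF2DelayError β τ b c e d) (N : ℕ) : 0 ≤ dataSize τ b e d N := by
  have := h.τ_pos.le
  have := h.b_isPosSemidef.nonneg (e 1)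
  unfold dataSize
  positivity

lemma dataSize_mono (h : IsBDF2DelayError β τ b c e d) : Monotone (dataSize τ b e d) :=
  fun M N hMN => by
    unfold dataSize
    gcongr ?_ + _ + _
    exact mul_le_mul_of_nonneg_left (sum_le_sum_of_subset_of_nonneg
      (Icc_subset_Icc_right hMN) fun _ _ _ => sq_nonneg _) h.τ_pos.le

lemma sum_norm_bdf2Diff_sub_two_sq_le (h : IsBDF2DelayError β τ b c e d) (N : ℕ) :
    ∑ m ∈ Icc 2 N, ‖bdf2Diff e (m - 2)‖ ^ 2 ≤ ∑ m ∈ Icc 1 N, ‖bdf2Diff e m‖ ^ 2 :=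
  calc ∑ m ∈ Icc 2 N, ‖bdf2Diff e (m - 2)‖ ^ 2
      ≤ ∑ m ∈ Icc 1 N, ‖bdf2Diff e (m - 1)‖ ^ 2 := by
        simpa [sub_sub, one_add_one_eq_two] using
          sum_Icc_sub_one_le (fun k => sq_nonneg ‖bdf2Diff e (k - 1)‖) 1 N
    _ ≤ ∑ m ∈ Icc 0 N, ‖bdf2Diff e m‖ ^ 2 :=
        sum_Icc_sub_one_le (fun k => sq_nonneg ‖bdf2Diff e k‖) 0 N
    _ = ∑ m ∈ Icc 1 N, ‖bdf2Diff e m‖ ^ 2 := by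
        rw [sum_Icc_eq_add_sum_Icc_add_one _ (Nat.zero_le N)]
        simp [h.bdf2Diff_zero]

lemma norm_bdf2Diff_sq_step (h : IsBDF2DelayError β τ b c e d) {m : ℕ} (hm : 2 ≤ m) :
    ‖bdf2Diff e m‖ ^ 2 / 2 + (τ * bdf2Energy b e m - τ * bdf2Energy b e (m - 1))
      ≤ 5 * τ ^ 2 * ‖d m‖ ^ 2 + ‖bdf2Diff e (m - 1)‖ ^ 2 / 5
        + ‖bdf2Diff e (m - 2)‖ ^ 2 / 10 := by
  set D := bdf2Diff e
  have heq := h.error_eq m hm (D m)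
  rw [real_inner_self_eq_norm_sq, show b (e m) (D m) = b (D m) (e m) from h.b_isSymm.eq _ _]
    at heq
  have hB : τ * (bdf2Energy b e m - bdf2Energy b e (m - 1)) ≤ τ * (2 * b (D m) (e m)) :=
    mul_le_mul_of_nonneg_left (h.b_isPosSemidef.bdf2Energy_sub_le e m) h.τ_pos.le
  have hd : 2 * τ * ⟪d m, D m⟫ ≤ 5 * τ ^ 2 * ‖d m‖ ^ 2 + ‖D m‖ ^ 2 / 5 := by
    nlinarith [real_inner_le_norm (d m) (D m), sq_nonneg (5 * τ * ‖d m‖ - ‖D m‖), h.τ_pos]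
  have hc₁ := h.two_mul_abs_c_le (D (m - 1)) (D m)
  have hc₂ := h.two_mul_abs_c_le (D (m - 2)) (D m)
  linarith [neg_abs_le (c (D (m - 1)) (D m)), le_abs_self (c (D (m - 2)) (D m))]

lemma sum_norm_bdf2Diff_sq_le (h : IsBDF2DelayError β τ b c e d) {N : ℕ} (hN : 2 ≤ N) :
    ∑ m ∈ Icc 1 N, ‖bdf2Diff e m‖ ^ 2 ≤ 25 * dataSize τ b e d N := by
  have hsum := sum_Icc_add_sub_le (x := fun m => ‖bdf2Diff e m‖ ^ 2 / 2)
    (E := fun k => τ * bdf2Energy b e k)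
    (y := fun m => 5 * τ ^ 2 * ‖d m‖ ^ 2 + ‖bdf2Diff e (m - 1)‖ ^ 2 / 5
        + ‖bdf2Diff e (m - 2)‖ ^ 2 / 10) hN
    (fun m hm => h.norm_bdf2Diff_sq_step (mem_Icc.1 hm).1)
  simp only [sum_add_distrib, ← mul_sum, ← sum_div] at hsum
  have hsplit := sum_Icc_eq_add_sum_Icc_add_one (fun m : ℕ => ‖bdf2Diff e m‖ ^ 2)
    (by omega : 1 ≤ N)
  have hshift₁ := sum_Icc_sub_one_le (fun k => sq_nonneg ‖bdf2Diff e k‖) 1 N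
  have hshift₂ := h.sum_norm_bdf2Diff_sub_two_sq_le N
  have hBN := mul_nonneg h.τ_pos.le (h.b_isPosSemidef.bdf2Energy_nonneg e N)
  have hτd : τ ^ 2 * ∑ j ∈ Icc 2 N, ‖d j‖ ^ 2 ≤ τ * ∑ j ∈ Icc 2 N, ‖d j‖ ^ 2 := by
    refine mul_le_mul_of_nonneg_right ?_ (sum_nonneg fun j _ => sq_nonneg ‖d j‖)
    nlinarith [h.τ_pos, h.τ_le_one]
  have hD₁ : ‖bdf2Diff e 1‖ ^ 2 = 9 * ‖e 1‖ ^ 2 := by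
    rw [h.bdf2Diff_one, norm_smul, Real.norm_ofNat]; ring
  simp only [Nat.cast_ofNat, Nat.cast_one, one_add_one_eq_two,
    show (2 : ℤ) - 1 = 1 by norm_num, h.bdf2Energy_one, hD₁] at hsum hsplit hshift₁
  unfold dataSize
  linarith [h.b_isPosSemidef.nonneg (e 1), sq_nonneg ‖e 1‖]

lemma modifiedEnergy_step (h : IsBDF2DelayError β τ b c e d) {m : ℕ} (hm : 2 ≤ m) :
    τ * b (e m) (e m) + (modifiedEnergy c e m - modifiedEnergy c e (m - 1))
      ≤ τ / β * ‖d m‖ ^ 2 + (‖bdf2Diff e (m - 1)‖ ^ 2 + ‖bdf2Diff e (m - 2)‖ ^ 2 / 2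
          + 2 * ‖bwdDiff e m‖ ^ 2 + ‖bwdDiff e (m - 1)‖ ^ 2) / 5 := by
  set D := bdf2Diff e
  set g := bwdDiff e
  have hidx : (m : ℤ) - 1 - 1 = m - 2 := by ring
  have heq := h.error_eq m hm (e m)
  have hA := isPosSemidef_inner.bdf2Energy_sub_le e m
  have hAc := h.c_isPosSemidef.bdf2Energy_sub_le e (m - 1)
  simp only [innerₗ_apply_apply] at hA
  rw [hidx] at hAc
  have hd : 2 * τ * ⟪d m, e m⟫ ≤ τ / β * ‖d m‖ ^ 2 + τ * b (e m) (e m) := by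
    have hβ := h.β_pos
    have hτ := h.τ_pos.le
    have hyoung : 2 * ⟪d m, e m⟫ ≤ ‖d m‖ ^ 2 / β + β * ‖e m‖ ^ 2 := by
      rw [div_add' _ _ _ hβ.ne', le_div_iff₀ hβ]
      nlinarith [real_inner_le_norm (d m) (e m), sq_nonneg (‖d m‖ - β * ‖e m‖)]
    calc 2 * τ * ⟪d m, e m⟫ = τ * (2 * ⟪d m, e m⟫) := by ring
      _ ≤ τ * (‖d m‖ ^ 2 / β + β * ‖e m‖ ^ 2) := by gcongr
      _ = τ / β * ‖d m‖ ^ 2 + τ * (β * ‖e m‖ ^ 2) := by ring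
      _ ≤ τ / β * ‖d m‖ ^ 2 + τ * b (e m) (e m) := by gcongr; exact h.b_coercive (e m)
  have hsplit₁ : c (D (m - 1)) (e m) = c (D (m - 1)) (e (m - 1)) + c (D (m - 1)) (g m) := by
    rw [← map_add]; simp only [g, bwdDiff, add_sub_cancel]
  have hsplit₂ : c (D (m - 2)) (e m)
      = c (D (m - 2)) (e (m - 2)) + c (D (m - 2)) (g m + g (m - 1)) := by
    rw [← map_add]; simp only [g, bwdDiff, hidx]; congr 1; abel
  have hc₁ := h.two_mul_abs_c_le (D (m - 1)) (g m)
  have hc₂ := h.two_mul_abs_c_le (D (m - 2)) (g m + g (m - 1))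
  have hg : ‖g m + g (m - 1)‖ ^ 2 ≤ 2 * ‖g m‖ ^ 2 + 2 * ‖g (m - 1)‖ ^ 2 := by
    nlinarith [norm_add_le (g m) (g (m - 1)), norm_nonneg (g m + g (m - 1)),
      sq_nonneg (‖g m‖ - ‖g (m - 1)‖)]
  simp only [modifiedEnergy, hidx]
  linarith [neg_abs_le (c (D (m - 1)) (g m)), le_abs_self (c (D (m - 2)) (g m + g (m - 1)))]

lemma le_modifiedEnergy (h : IsBDF2DelayError β τ b c e d) (k : ℤ) :
    bdf2Energy (innerₗ H) e k / 2 - bdf2Energy (innerₗ H) e (k - 2) / 10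
      ≤ modifiedEnergy c e k := by
  have hAc := h.c_isPosSemidef.bdf2Energy_sub_le e (k - 1)
  rw [sub_sub, one_add_one_eq_two] at hAc
  have := h.c_isPosSemidef.bdf2Energy_nonneg e (k - 1)
  have := h.bdf2Energy_c_le (k - 2)
  unfold modifiedEnergy
  linarith

lemma modifiedEnergy_one (h : IsBDF2DelayError β τ b c e d) :
    modifiedEnergy c e 1 = 5 / 2 * ‖e 1‖ ^ 2 := by
  rw [modifiedEnergy, sub_self, h.bdf2Energy_one, h.bdf2Energy_zero, h.bdf2Diff_zero,
    innerₗ_apply_apply, real_inner_self_eq_norm_sq, map_zero, LinearMap.zero_apply]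
  ring

lemma errorEnergy_le_errorEnergy_sub_two (h : IsBDF2DelayError β τ b c e d) {N : ℕ}
    (hN : 2 ≤ N) :
    errorEnergy τ b e N ≤ errorEnergy τ b e (N - 2) / 5 + (16 + 1 / β) * dataSize τ b e d N := by
  have hsum := sum_Icc_add_sub_le (x := fun m => τ * b (e m) (e m)) (E := modifiedEnergy c e)
    (y := fun m => τ / β * ‖d m‖ ^ 2 + (‖bdf2Diff e (m - 1)‖ ^ 2
      + ‖bdf2Diff e (m - 2)‖ ^ 2 / 2 + 2 * ‖bwdDiff e m‖ ^ 2 + ‖bwdDiff e (m - 1)‖ ^ 2) / 5) hN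
    (fun m hm => h.modifiedEnergy_step (mem_Icc.1 hm).1)
  simp only [sum_add_distrib, ← mul_sum, ← sum_div, Nat.cast_ofNat,
    show (2 : ℤ) - 1 = 1 by norm_num, h.modifiedEnergy_one] at hsum
  have hS := h.sum_norm_bdf2Diff_sq_le hN
  have hD₁ : ∑ m ∈ Icc 2 N, ‖bdf2Diff e (m - 1)‖ ^ 2 ≤ ∑ m ∈ Icc 1 N, ‖bdf2Diff e m‖ ^ 2 :=
    sum_Icc_sub_one_le (fun k => sq_nonneg ‖bdf2Diff e k‖) 1 N
  have hD₂ := h.sum_norm_bdf2Diff_sub_two_sq_le N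
  have hG := sum_norm_bwdDiff_sq_le e h.bwdDiff_zero (by omega : 1 ≤ N)
  have hg₁ : ∑ m ∈ Icc 2 N, ‖bwdDiff e m‖ ^ 2 ≤ ∑ m ∈ Icc 1 N, ‖bwdDiff e m‖ ^ 2 :=
    sum_le_sum_of_subset_of_nonneg (Icc_subset_Icc_left (by norm_num)) fun _ _ _ => sq_nonneg _
  have hg₂ : ∑ m ∈ Icc 2 N, ‖bwdDiff e (m - 1)‖ ^ 2 ≤ ∑ m ∈ Icc 1 N, ‖bwdDiff e m‖ ^ 2 :=
    sum_Icc_sub_one_le (fun k => sq_nonneg ‖bwdDiff e k‖) 1 N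
  have hF := h.le_modifiedEnergy N
  have hb : 0 ≤ τ * ∑ m ∈ Icc 2 (N - 2), b (e m) (e m) :=
    mul_nonneg h.τ_pos.le (sum_nonneg fun m _ => h.b_isPosSemidef.nonneg _)
  have hd : τ / β * ∑ m ∈ Icc 2 N, ‖d m‖ ^ 2 ≤ 1 / β * dataSize τ b e d N := by
    rw [div_mul_eq_mul_div, one_div_mul_eq_div]
    gcongr
    · exact h.β_pos.le
    · unfold dataSize
      linarith [sq_nonneg ‖e 1‖, mul_nonneg h.τ_pos.le (h.b_isPosSemidef.nonneg (e 1))]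
  have he₁ : ‖e 1‖ ^ 2 ≤ dataSize τ b e d N := by
    unfold dataSize
    linarith [mul_nonneg h.τ_pos.le (sum_nonneg fun j (_ : j ∈ Icc 2 N) => sq_nonneg ‖d j‖),
      mul_nonneg h.τ_pos.le (h.b_isPosSemidef.nonneg (e 1))]
  simp only [errorEnergy, Nat.cast_sub hN, Nat.cast_ofNat]
  linarith

lemma errorEnergy_le (h : IsBDF2DelayError β τ b c e d) (N : ℕ) :
    errorEnergy τ b e N ≤ (20 + 2 / β) * dataSize τ b e d N := by
  have hβ := h.β_pos
  refine le_mul_of_le_two_step h.dataSize_mono (h.dataSize_nonneg 0) (q := 1 / 5)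
    (K := 16 + 1 / β) (by norm_num) (by positivity) (by ring_nf; linarith [inv_pos.2 hβ])
    (fun N hN => ?_) (fun N hN => by linarith [h.errorEnergy_le_errorEnergy_sub_two hN]) N
  have hR := h.dataSize_nonneg N
  interval_cases N
  · rw [show errorEnergy τ b e 0 = 0 by simp [errorEnergy, h.bdf2Energy_zero]]
    exact mul_nonneg (by positivity) hR
  · have h₁ : errorEnergy τ b e 1 = 5 / 2 * ‖e 1‖ ^ 2 := by
      simp only [errorEnergy, Nat.cast_one, h.bdf2Energy_one, innerₗ_apply_apply,
        real_inner_self_eq_norm_sq, Icc_eq_empty_of_lt one_lt_two, sum_empty, mul_zero]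
      ring
    have he₁ : ‖e 1‖ ^ 2 ≤ dataSize τ b e d 1 := by
      simp [dataSize, mul_nonneg h.τ_pos.le (h.b_isPosSemidef.nonneg (e 1))]
    rw [h₁]
    nlinarith [div_pos two_pos hβ]

lemma norm_sq_add_sum_le (h : IsBDF2DelayError β τ b c e d) (N : ℕ) :
    ‖e N‖ ^ 2 + τ * ∑ m ∈ Icc 2 N, b (e m) (e m) ≤ (40 + 4 / β) * dataSize τ b e d N :=
  calc ‖e N‖ ^ 2 + τ * ∑ m ∈ Icc 2 N, b (e m) (e m) ≤ 2 * errorEnergy τ b e N := by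
        have he := isPosSemidef_inner.apply_self_le_bdf2Energy e N
        have hb := mul_nonneg h.τ_pos.le (sum_nonneg fun m (_ : m ∈ Icc 2 N) =>
          h.b_isPosSemidef.nonneg (e m))
        rw [innerₗ_apply_apply, real_inner_self_eq_norm_sq] at he
        unfold errorEnergy
        linarith
    _ ≤ 2 * ((20 + 2 / β) * dataSize τ b e d N) := by gcongr; exact h.errorEnergy_le N
    _ = (40 + 4 / β) * dataSize τ b e d N := by ring

end IsBDF2DelayError

end ErrorRecursion

/-- Step 2 of the proof of Theorem 4.2: discrete stability estimate for the errors of the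
BDF-2 discretization of the neutral delay equation, with a constant `C` depending only on
the ellipticity constant `β` of the form `b`, under the weak coupling condition `ω ≤ 1/5`. -/
theorem bdf2_delay_error_estimate (β : ℝ) (hβ : 0 < β) :
    ∃ C : ℝ, 0 < C ∧
      ∀ (H : Type u) [NormedAddCommGroup H] [InnerProductSpace ℝ H] [CompleteSpace H]
        (b ctil : H →ₗ[ℝ] H →ₗ[ℝ] ℝ),
        (∀ x y, b x y = b y x) → (∀ x : H, β * ‖x‖ ^ 2 ≤ b x x) →
        (∀ x y, ctil x y = ctil y x) →
        ∀ ω : ℝ, 0 ≤ ω → ω ≤ 1 / 5 →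
        (∀ x : H, 0 ≤ ctil x x ∧ ctil x x ≤ ω * ‖x‖ ^ 2) →
        ∀ τ : ℝ, 0 < τ → τ ≤ 1 →
        ∀ e : ℤ → H, e (-2) = 0 → e (-1) = 0 → e 0 = 0 →
        ∀ d : ℕ → H,
        (∀ (n : ℕ) (q : H),
          ⟪(3 : ℝ) • e ((n : ℤ) + 2) - (4 : ℝ) • e ((n : ℤ) + 1) + e (n : ℤ), q⟫
            + 2 * τ * b (e ((n : ℤ) + 2)) q
            + 2 * ctil ((3 : ℝ) • e ((n : ℤ) + 1) - (4 : ℝ) • e (n : ℤ) + e ((n : ℤ) - 1)) q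
            - ctil ((3 : ℝ) • e (n : ℤ) - (4 : ℝ) • e ((n : ℤ) - 1) + e ((n : ℤ) - 2)) q
          = 2 * τ * ⟪d (n + 2), q⟫) →
        ∀ n : ℕ, 2 ≤ n →
          ‖e (n : ℤ)‖ ^ 2 + τ * (∑ j ∈ Finset.Icc 2 n, b (e (j : ℤ)) (e (j : ℤ)))
            ≤ C * (τ * (∑ j ∈ Finset.Icc 2 n, ‖d j‖ ^ 2) + ‖e 1‖ ^ 2 + τ * b (e 1) (e 1)) := by
  refine ⟨40 + 4 / β, by positivity, ?_⟩
  intro H _ _ _ b c hb hb_coercive hc ω _ hω hc_le τ hτ hτ_le e he₂ he₁ he₀ d heq n _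
  have h : IsBDF2DelayError β τ b c e d :=
    { β_pos := hβ, b_isSymm := ⟨hb⟩, b_coercive := hb_coercive,
      c_isPosSemidef := ⟨⟨hc⟩, ⟨fun x => (hc_le x).1⟩⟩,
      c_le := fun x => (hc_le x).2.trans (by nlinarith [sq_nonneg ‖x‖]),
      τ_pos := hτ, τ_le_one := hτ_le, e_neg_two := he₂, e_neg_one := he₁, e_zero := he₀,
      error_eq := fun m hm q => by
        obtain ⟨k, rfl⟩ := Nat.exists_eq_add_of_le' hm
        have := heq k q
        simp only [bdf2Diff]
        push_cast
        ring_nf at this ⊢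
        exact this }
  exact h.norm_sq_add_sum_le n
end

section
/- Let V, Q, H be real Hilbert spaces and let ι : Q → H be an injective bounded linear map. Let a : V × V → ℝ be a symmetric bounded bilinear form with a(v,v) ≥ c_a‖v‖_V² (c_a > 0), let b : Q × Q → ℝ be a symmetric bounded bilinear form with b(q,q) ≥ c_b‖q‖_Q² (c_b > 0), let c : H × H → ℝ be a symmetric bounded bilinear form with c(h,h) ≥ c_c‖h‖_H² (c_c > 0), and let d : V × H → ℝ be a bilinear form with |d(v,h)| ≤ C_d‖v‖_V‖h‖_H. Let τ > 0, T > 0, let f : [0,T] → V* be continuously differentiable and g : [0,T] → Q* arbitrary. Suppose u, ũ : [0,T] → V are continuously differentiable, p : [0,T] → Q and p̃ : [−2τ, T] → Q are such that ι∘p is continuously differentiable and ι∘p̃ is three times continuously differentiable, and that for all t ∈ [0,T], all v ∈ V and all q ∈ Q: (i) a(u(t),v) − d(v, ι p(t)) = f(t)(v) and d(u'(t), ιq) + c((ι∘p)'(t), ιq) + b(p(t), q) = g(t)(q); (ii) a(ũ(t),v) − d(v, 2·ι p̃(t−τ) − ι p̃(t−2τ)) = f(t)(v) and d(ũ'(t),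 ιq) + c((ι∘p̃)'(t), ιq) + b(p̃(t), q) = g(t)(q). Assume the history consistency conditions p̃(0) = p(0) and 2·p̃(−τ) − p̃(−2τ) = p(0). Then there exists a constant C > 0, depending only on the ellipticity and continuity constants of a, b, c, d, such that for all t ∈ [0,T]: ‖p̃(t) − p(t)‖_Q² + ‖ũ(t) − u(t)‖_V² ≤ C·t·τ⁴·( M₂² + M₃² ), where M_j := sup_{s ∈ [−2τ,T]} ‖(ι∘p̃)^{(j)}(s)‖_H. -/
/-!
Write `e_u = ũ - u`, `e_p = p̃ - p` and `η(t) = 2 x(t - τ) - x(t - 2τ) - x(t)` for the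
extrapolation error of `x = ι ∘ p̃`. Subtracting the two systems, `(e_u, e_p)` solves the coupled
system with the extra load `η` in the elliptic equation and vanishing data at `t = 0`. Testing the
time-differentiated elliptic equation with `e_u'` and the parabolic one with `e_p`, the energy
`a(e_u, e_u) + c(ι e_p, ι e_p) + b(e_p, e_p)` has derivative
`2 d(e_u', η + η') - 2 a(e_u', e_u') - 2 b(e_p, e_p) - 2 c((ι e_p)', (ι e_p)')`, which Young's
inequality bounds by `C_d² (‖η‖² + ‖η'‖²) / c_a`. Since `η` and `η'` are second differences,
the mean value theorem bounds them by `τ² M₂` and `τ² M₃`, and integrating from `0` gives the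
`t τ⁴` estimate.
-/

open Set Filter Topology

section Extrapolation

variable {E : Type*} [NormedAddCommGroup E] [NormedSpace ℝ E]

def extrapolationError (x : ℝ → E) (τ t : ℝ) : E :=
  (2 : ℝ) • x (t - τ) - x (t - 2 * τ) - x t

theorem HasDerivWithinAt.comp_sub_const_of_mapsTo {x : ℝ → E} {x' : E} {s X : Set ℝ} {c r : ℝ}
    (hx : HasDerivWithinAt x x' X (r - c)) (hs : MapsTo (· - c) s X) :
    HasDerivWithinAt (fun r => x (r - c)) x' s r := by
  simpa [Function.comp_def] using hx.scomp r ((hasDerivWithinAt_id r s).sub_const c) hs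

theorem norm_extrapolationError_le {x x' x'' : ℝ → E} {s : Set ℝ} {M τ t : ℝ}
    (hs : Convex ℝ s) (hx : ∀ r ∈ s, HasDerivWithinAt x (x' r) s r)
    (hx' : ∀ r ∈ s, HasDerivWithinAt x' (x'' r) s r) (hM : ∀ r ∈ s, ‖x'' r‖ ≤ M)
    (hτ : 0 ≤ τ) (ht : t ∈ s) (ht₂ : t - 2 * τ ∈ s) :
    ‖extrapolationError x τ t‖ ≤ M * τ ^ 2 := by
  set J := Icc (t - τ) t
  have hJ : ∀ r ∈ J, r ∈ s ∧ r - τ ∈ s := fun r hr => by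
    constructor <;> refine hs.ordConnected.out ht₂ ht ⟨?_, ?_⟩ <;> linarith [hr.1, hr.2]
  -- `r ↦ x r - x (r - τ)` has derivative `x' r - x' (r - τ)`, of norm at most `M τ` on `J`.
  have hdiff : ∀ r ∈ J, HasDerivWithinAt (fun r => x r - x (r - τ)) (x' r - x' (r - τ)) J r :=
    fun r hr => ((hx r (hJ r hr).1).mono fun y hy => (hJ y hy).1).sub
      ((hx _ (hJ r hr).2).comp_sub_const_of_mapsTo fun y hy => (hJ y hy).2)
  have hdiff_le : ∀ r ∈ J, ‖x' r - x' (r - τ)‖ ≤ M * τ := fun r hr => by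
    simpa [abs_of_nonneg hτ] using
      hs.norm_image_sub_le_of_norm_hasDerivWithin_le hx' hM (hJ r hr).2 (hJ r hr).1
  have key := (convex_Icc (t - τ) t).norm_image_sub_le_of_norm_hasDerivWithin_le hdiff hdiff_le
    (left_mem_Icc.2 (by linarith)) (right_mem_Icc.2 (by linarith))
  calc ‖extrapolationError x τ t‖ = ‖x t - x (t - τ) - (x (t - τ) - x (t - τ - τ))‖ := by
        rw [extrapolationError, ← norm_neg, show t - 2 * τ = t - τ - τ by ring]; congr 1; module
    _ ≤ M * τ * ‖t - (t - τ)‖ := key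
    _ = M * τ ^ 2 := by rw [sub_sub_cancel, Real.norm_of_nonneg hτ]; ring

variable {τ T : ℝ}

theorem hasDerivWithinAt_extrapolationError {x x' : ℝ → E} (hτ : 0 ≤ τ)
    (hx : ∀ r ∈ Icc (-(2 * τ)) T, HasDerivWithinAt x (x' r) (Icc (-(2 * τ)) T) r)
    {t : ℝ} (ht : t ∈ Icc 0 T) :
    HasDerivWithinAt (extrapolationError x τ) (extrapolationError x' τ t) (Icc 0 T) t := by
  have hshift : ∀ c ∈ Icc 0 (2 * τ),
      HasDerivWithinAt (fun r => x (r - c)) (x' (t - c)) (Icc 0 T) t := fun c hc => by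
    have hmaps : MapsTo (· - c) (Icc 0 T) (Icc (-(2 * τ)) T) :=
      fun r hr => ⟨by linarith [hr.1, hc.2], by linarith [hr.2, hc.1]⟩
    exact (hx _ (hmaps ht)).comp_sub_const_of_mapsTo hmaps
  have hsub : Icc 0 T ⊆ Icc (-(2 * τ)) T := Icc_subset_Icc (by linarith) le_rfl
  exact (((hshift τ ⟨hτ, by linarith⟩).const_smul (2 : ℝ)).sub
    (hshift (2 * τ) ⟨by linarith, le_rfl⟩)).sub ((hx t (hsub ht)).mono hsub)

theorem norm_extrapolationError_le_of_contDiffOn {x : ℝ → E} {M : ℝ} (hτ : 0 < τ) (hT : 0 < T)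
    (hx : ContDiffOn ℝ 2 x (Icc (-(2 * τ)) T))
    (hM : ∀ r ∈ Icc (-(2 * τ)) T, ‖iteratedDerivWithin 2 x (Icc (-(2 * τ)) T) r‖ ≤ M)
    {t : ℝ} (ht : t ∈ Icc 0 T) :
    ‖extrapolationError x τ t‖ ≤ M * τ ^ 2 := by
  have hX : UniqueDiffOn ℝ (Icc (-(2 * τ)) T) := uniqueDiffOn_Icc (by linarith)
  have hx' : ContDiffOn ℝ 1 (derivWithin x (Icc (-(2 * τ)) T)) (Icc (-(2 * τ)) T) :=
    hx.derivWithin hX (by norm_num)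
  refine norm_extrapolationError_le (convex_Icc _ _)
    (fun r hr => (hx.differentiableOn two_ne_zero r hr).hasDerivWithinAt)
    (fun r hr => (hx'.differentiableOn one_ne_zero r hr).hasDerivWithinAt) (fun r hr => ?_) hτ.le
    ⟨by linarith [ht.1], ht.2⟩ ⟨by linarith [ht.1], by linarith [ht.2]⟩
  simpa [iteratedDerivWithin_succ'] using hM r hr

end Extrapolation

/-- Only `ι ∘ e` is assumed differentiable; the weak equation `b(e r, ·) = φ r ∘ ι` is what makes
`b(e, e)` differentiable. -/
theorem hasDerivWithinAt_apply_self_of_eq_comp {Q H : Type*} [AddCommGroup Q] [Module ℝ Q]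
    [NormedAddCommGroup H] [NormedSpace ℝ H] {b : Q →ₗ[ℝ] Q →ₗ[ℝ] ℝ} (hb : ∀ q r, b q r = b r q)
    {ι : Q →ₗ[ℝ] H} {e : ℝ → Q} {φ : ℝ → H →L[ℝ] ℝ} {h' : H} {s : Set ℝ} {t : ℝ}
    (he : HasDerivWithinAt (fun r => ι (e r)) h' s t) (hφ : ContinuousWithinAt φ s t)
    (heq : ∀ r ∈ s, ∀ q, b (e r) q = φ r (ι q)) (ht : t ∈ s) :
    HasDerivWithinAt (fun r => b (e r) (e r)) (2 * φ t h') s t := by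
  rw [hasDerivWithinAt_iff_tendsto_slope] at he ⊢
  -- By symmetry, `b(e r, e r) - b(e t, e t) = (φ r + φ t) (ι (e r - e t))`.
  have hslope : ∀ r ∈ s, slope (fun r => b (e r) (e r)) t r
      = (φ r + φ t) (slope (fun r => ι (e r)) t r) := fun r hr => by
    have hdiff : b (e r) (e r) - b (e t) (e t) = b (e r) (e r - e t) + b (e t) (e r - e t) := by
      simp only [map_sub, hb (e t) (e r)]; ring
    simp only [slope_def_field, slope_def_module]
    rw [hdiff, heq r hr, heq t ht]
    simp only [map_sub, map_smul, _root_.add_apply, smul_eq_mul]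
    ring
  have hφ' : Tendsto (fun r => φ r + φ t) (𝓝[s \ {t}] t) (𝓝 (φ t + φ t)) :=
    (hφ.mono_left (nhdsWithin_mono t sdiff_subset)).add tendsto_const_nhds
  have hlim := (isBoundedBilinearMap_apply.continuous.tendsto _).comp (hφ'.prodMk_nhds he)
  rw [show (2 : ℝ) * φ t h' = (φ t + φ t) h' by simp [two_mul]]
  refine hlim.congr' ?_
  filter_upwards [self_mem_nhdsWithin] with r hr
  exact (hslope r hr.1).symm

theorem sub_le_mul_sub_of_hasDerivWithinAt_le {f f' : ℝ → ℝ} {a b C x : ℝ}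
    (hf : ∀ y ∈ Icc a b, HasDerivWithinAt f (f' y) (Icc a b) y) (hC : ∀ y ∈ Icc a b, f' y ≤ C)
    (hx : x ∈ Icc a b) : f x - f a ≤ C * (x - a) := by
  have hderiv : ∀ y ∈ interior (Icc a b), HasDerivAt f (f' y) y := fun y hy => by
    rw [interior_Icc] at hy
    exact (hf y (Ioo_subset_Icc_self hy)).hasDerivAt (Icc_mem_nhds hy.1 hy.2)
  refine (convex_Icc a b).image_sub_le_mul_sub_of_deriv_le
    (fun y hy => (hf y hy).continuousWithinAt)
    (fun y hy => (hderiv y hy).differentiableAt.differentiableWithinAt)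
    (fun y hy => (hderiv y hy).deriv ▸ hC y (interior_subset hy)) a
    (left_mem_Icc.2 (hx.1.trans hx.2)) x hx hx.1

section Energy

variable {V Q H : Type*} [NormedAddCommGroup V] [NormedSpace ℝ V] [NormedAddCommGroup Q]
  [NormedSpace ℝ Q] [NormedAddCommGroup H] [NormedSpace ℝ H]
  {a : V →L[ℝ] V →L[ℝ] ℝ} {b : Q →ₗ[ℝ] Q →ₗ[ℝ] ℝ} {c : H →L[ℝ] H →L[ℝ] ℝ}
  {d : V →L[ℝ] H →L[ℝ] ℝ} {ι : Q →L[ℝ] H}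

noncomputable def poroelasticEnergy (a : V →L[ℝ] V →L[ℝ] ℝ) (b : Q →ₗ[ℝ] Q →ₗ[ℝ] ℝ)
    (c : H →L[ℝ] H →L[ℝ] ℝ) (ι : Q →L[ℝ] H) (v : V) (q : Q) : ℝ :=
  a v v + c (ι q) (ι q) + b q q

variable {s : Set ℝ} {eu eu' : ℝ → V} {ep : ℝ → Q} {h' η η' : ℝ → H}

theorem hasDerivWithinAt_poroelasticEnergy (ha : ∀ v w, a v w = a w v) (hb : ∀ q r, b q r = b r q)
    (hc : ∀ x y, c x y = c y x) (hs : UniqueDiffOn ℝ s)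
    (heu : ∀ t ∈ s, HasDerivWithinAt eu (eu' t) s t) (heu' : ContinuousOn eu' s)
    (hep : ∀ t ∈ s, HasDerivWithinAt (fun t => ι (ep t)) (h' t) s t) (hh' : ContinuousOn h' s)
    (hη : ∀ t ∈ s, HasDerivWithinAt η (η' t) s t)
    (helliptic : ∀ t ∈ s, ∀ v, a (eu t) v = d v (ι (ep t) + η t))
    (hparabolic : ∀ t ∈ s, ∀ q, d (eu' t) (ι q) + c (h' t) (ι q) + b (ep t) q = 0)
    {t : ℝ} (ht : t ∈ s) :
    HasDerivWithinAt (fun t => poroelasticEnergy a b c ι (eu t) (ep t))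
      (2 * d (eu' t) (η t) + 2 * d (eu' t) (η' t) - 2 * b (ep t) (ep t)
        - 2 * a (eu' t) (eu' t) - 2 * c (h' t) (h' t)) s t := by
  have helliptic' : ∀ v, a (eu' t) v = d v (h' t + η' t) := fun v => by
    have hlhs := (a.hasDerivWithinAt_of_bilinear (heu t ht)
      (hasDerivWithinAt_const t s v)).congr_of_mem (fun r hr => (helliptic r hr v).symm) ht
    have hrhs := (d v).hasFDerivAt.comp_hasDerivWithinAt t ((hep t ht).add (hη t ht))
    simpa using (hs t ht).eq_deriv _ hlhs hrhs
  have hb_deriv := hasDerivWithinAt_apply_self_of_eq_comp hb (ι := (ι : Q →ₗ[ℝ] H))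
    (φ := fun r => -(d (eu' r) + c (h' r))) (hep t ht)
    (((d.continuous.comp_continuousOn heu').add (c.continuous.comp_continuousOn hh')).neg t ht)
    (fun r hr q => by
      simp only [ContinuousLinearMap.coe_coe, _root_.add_apply, _root_.neg_apply]
      linarith [hparabolic r hr q]) ht
  have hsum := ((a.hasDerivWithinAt_of_bilinear (heu t ht) (heu t ht)).add
    (c.hasDerivWithinAt_of_bilinear (hep t ht) (hep t ht))).add hb_deriv
  refine hsum.congr_deriv ?_
  have h1 := helliptic t ht (eu' t)
  have h2 := helliptic' (eu' t)
  have h3 := hparabolic t ht (ep t)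
  simp only [map_add, _root_.neg_apply, _root_.add_apply] at h1 h2 ⊢
  linarith [ha (eu t) (eu' t), hc (ι (ep t)) (h' t)]

theorem poroelasticEnergy_deriv_le {c_a C_d : ℝ} (hca : 0 < c_a)
    (hd : ∀ v x, |d v x| ≤ C_d * ‖v‖ * ‖x‖)
    {v : V} {q : Q} {x : H} (hv : c_a * ‖v‖ ^ 2 ≤ a v v) (hq : 0 ≤ b q q) (hx : 0 ≤ c x x)
    (y z : H) :
    2 * d v y + 2 * d v z - 2 * b q q - 2 * a v v - 2 * c x x
      ≤ C_d ^ 2 / c_a * (‖y‖ ^ 2 + ‖z‖ ^ 2) := by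
  have hdyz : d v y + d v z ≤ C_d * ‖v‖ * (‖y‖ + ‖z‖) := by
    linarith [(le_abs_self _).trans (hd v y), (le_abs_self _).trans (hd v z)]
  -- Young's inequality `2 C_d ‖v‖ P ≤ 2 c_a ‖v‖² + C_d² P² / (2 c_a)`, then `P² ≤ 2 (‖y‖² + ‖z‖²)`.
  rw [div_mul_eq_mul_div, le_div_iff₀ hca]
  nlinarith [sq_nonneg (C_d * (‖y‖ + ‖z‖) - 2 * c_a * ‖v‖), sq_nonneg (‖y‖ - ‖z‖), sq_nonneg C_d]

theorem poroelasticEnergy_le_of_error_equations {c_a C_d K₁ K₂ T : ℝ} (hca : 0 < c_a) (hT : 0 < T)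
    (ha : ∀ v w, a v w = a w v) (ha_coercive : ∀ v, c_a * ‖v‖ ^ 2 ≤ a v v)
    (hb : ∀ q r, b q r = b r q) (hb_nonneg : ∀ q, 0 ≤ b q q)
    (hc : ∀ x y, c x y = c y x) (hc_nonneg : ∀ x, 0 ≤ c x x)
    (hd : ∀ v x, |d v x| ≤ C_d * ‖v‖ * ‖x‖)
    (heu : ∀ t ∈ Icc 0 T, HasDerivWithinAt eu (eu' t) (Icc 0 T) t)
    (heu' : ContinuousOn eu' (Icc 0 T))
    (hep : ∀ t ∈ Icc 0 T, HasDerivWithinAt (fun t => ι (ep t)) (h' t) (Icc 0 T) t)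
    (hh' : ContinuousOn h' (Icc 0 T))
    (hη : ∀ t ∈ Icc 0 T, HasDerivWithinAt η (η' t) (Icc 0 T) t)
    (helliptic : ∀ t ∈ Icc 0 T, ∀ v, a (eu t) v = d v (ι (ep t) + η t))
    (hparabolic : ∀ t ∈ Icc 0 T, ∀ q, d (eu' t) (ι q) + c (h' t) (ι q) + b (ep t) q = 0)
    (hep₀ : ep 0 = 0) (hη₀ : η 0 = 0)
    (hη_le : ∀ t ∈ Icc 0 T, ‖η t‖ ≤ K₁) (hη'_le : ∀ t ∈ Icc 0 T, ‖η' t‖ ≤ K₂)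
    {t : ℝ} (ht : t ∈ Icc 0 T) :
    poroelasticEnergy a b c ι (eu t) (ep t) ≤ t * (C_d ^ 2 / c_a * (K₁ ^ 2 + K₂ ^ 2)) := by
  have h₀ : (0 : ℝ) ∈ Icc 0 T := left_mem_Icc.2 hT.le
  have heu₀ : eu 0 = 0 := by
    have := ha_coercive (eu 0)
    rw [helliptic 0 h₀, hep₀, hη₀, map_zero, add_zero, map_zero] at this
    simpa using nonpos_of_mul_nonpos_right this hca
  have hineq := sub_le_mul_sub_of_hasDerivWithinAt_le (C := C_d ^ 2 / c_a * (K₁ ^ 2 + K₂ ^ 2))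
    (fun r hr => hasDerivWithinAt_poroelasticEnergy ha hb hc (uniqueDiffOn_Icc hT) heu heu' hep
      hh' hη helliptic hparabolic hr)
    (fun r hr => (poroelasticEnergy_deriv_le hca hd (ha_coercive _) (hb_nonneg _) (hc_nonneg _)
      (η r) (η' r)).trans (by gcongr; exacts [hη_le r hr, hη'_le r hr])) ht
  simpa [poroelasticEnergy, heu₀, hep₀, mul_comm] using hineq

theorem norm_sq_add_norm_sq_le_of_poroelasticEnergy_le {c_a c_b E : ℝ} (hca : 0 < c_a)
    (hcb : 0 < c_b) {v : V} {q : Q} (hv : c_a * ‖v‖ ^ 2 ≤ a v v) (hq : c_b * ‖q‖ ^ 2 ≤ b q q)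
    (hιq : 0 ≤ c (ι q) (ι q)) (hE : poroelasticEnergy a b c ι v q ≤ E) :
    ‖q‖ ^ 2 + ‖v‖ ^ 2 ≤ (1 / c_a + 1 / c_b) * E := by
  rw [poroelasticEnergy] at hE
  have hv' : ‖v‖ ^ 2 ≤ E / c_a := by
    rw [le_div_iff₀ hca]; nlinarith [sq_nonneg ‖q‖, mul_pos hcb hcb]
  have hq' : ‖q‖ ^ 2 ≤ E / c_b := by
    rw [le_div_iff₀ hcb]; nlinarith [sq_nonneg ‖v‖]
  linarith [show (1 / c_a + 1 / c_b) * E = E / c_a + E / c_b by ring]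

end Energy

/-- Theorem 3.2: the solution `(ũ, p̃)` of the poroelastic system with two delays (pressure in
the elliptic equation replaced by the extrapolation `2p̃(t-τ) - p̃(t-2τ)`) differs from the
solution `(u, p)` of the coupled system only by a term of order `τ²`, with a constant depending
only on the ellipticity and continuity constants of the bilinear forms `a`, `b`, `c`, `d`. -/
theorem delay_system_second_order_approximation
    (c_a C_a c_b C_b c_c C_c C_d : ℝ) (hca : 0 < c_a) (hcb : 0 < c_b) (hcc : 0 < c_c) :
    ∃ C : ℝ, 0 < C ∧
      ∀ (V : Type u) (Q : Type v) (H : Type w)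
        [NormedAddCommGroup V] [InnerProductSpace ℝ V] [CompleteSpace V]
        [NormedAddCommGroup Q] [InnerProductSpace ℝ Q] [CompleteSpace Q]
        [NormedAddCommGroup H] [InnerProductSpace ℝ H] [CompleteSpace H]
        (ι : Q →L[ℝ] H), Function.Injective ι →
      ∀ a : V →ₗ[ℝ] V →ₗ[ℝ] ℝ, (∀ v w, a v w = a w v) →
        (∀ v : V, c_a * ‖v‖ ^ 2 ≤ a v v) → (∀ v w : V, |a v w| ≤ C_a * ‖v‖ * ‖w‖) →
      ∀ b : Q →ₗ[ℝ] Q →ₗ[ℝ] ℝ, (∀ q r, b q r = b r q) →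
        (∀ q : Q, c_b * ‖q‖ ^ 2 ≤ b q q) → (∀ q r : Q, |b q r| ≤ C_b * ‖q‖ * ‖r‖) →
      ∀ c : H →ₗ[ℝ] H →ₗ[ℝ] ℝ, (∀ x y, c x y = c y x) →
        (∀ x : H, c_c * ‖x‖ ^ 2 ≤ c x x) → (∀ x y : H, |c x y| ≤ C_c * ‖x‖ * ‖y‖) →
      ∀ d : V →ₗ[ℝ] H →ₗ[ℝ] ℝ, (∀ (v : V) (x : H), |d v x| ≤ C_d * ‖v‖ * ‖x‖) →
      ∀ τ T : ℝ, 0 < τ → 0 < T →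
      ∀ f : ℝ → V →L[ℝ] ℝ, ContDiffOn ℝ 1 f (Set.Icc 0 T) →
      ∀ (g : ℝ → Q →L[ℝ] ℝ) (u utld : ℝ → V) (p ptld : ℝ → Q),
        ContDiffOn ℝ 1 u (Set.Icc 0 T) → ContDiffOn ℝ 1 utld (Set.Icc 0 T) →
        ContDiffOn ℝ 1 (fun s => ι (p s)) (Set.Icc 0 T) →
        ContDiffOn ℝ 3 (fun s => ι (ptld s)) (Set.Icc (-(2 * τ)) T) →
        (∀ t ∈ Set.Icc (0 : ℝ) T, ∀ v : V, a (u t) v - d v (ι (p t)) = f t v) →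
        (∀ t ∈ Set.Icc (0 : ℝ) T, ∀ q : Q,
          d (derivWithin u (Set.Icc 0 T) t) (ι q)
            + c (derivWithin (fun s => ι (p s)) (Set.Icc 0 T) t) (ι q)
            + b (p t) q = g t q) →
        (∀ t ∈ Set.Icc (0 : ℝ) T, ∀ v : V,
          a (utld t) v - d v ((2 : ℝ) • ι (ptld (t - τ)) - ι (ptld (t - 2 * τ))) = f t v) →
        (∀ t ∈ Set.Icc (0 : ℝ) T, ∀ q : Q,
          d (derivWithin utld (Set.Icc 0 T) t) (ι q)
            + c (derivWithin (fun s => ι (ptld s)) (Set.Icc (-(2 * τ)) T) t) (ι q)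
            + b (ptld t) q = g t q) →
        ptld 0 = p 0 → (2 : ℝ) • ptld (-τ) - ptld (-(2 * τ)) = p 0 →
      ∀ M₂ M₃ : ℝ,
        (∀ s ∈ Set.Icc (-(2 * τ)) T,
          ‖iteratedDerivWithin 2 (fun s => ι (ptld s)) (Set.Icc (-(2 * τ)) T) s‖ ≤ M₂) →
        (∀ s ∈ Set.Icc (-(2 * τ)) T,
          ‖iteratedDerivWithin 3 (fun s => ι (ptld s)) (Set.Icc (-(2 * τ)) T) s‖ ≤ M₃) →
      ∀ t ∈ Set.Icc (0 : ℝ) T,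
        ‖ptld t - p t‖ ^ 2 + ‖utld t - u t‖ ^ 2 ≤ C * t * τ ^ 4 * (M₂ ^ 2 + M₃ ^ 2) := by
  refine ⟨(C_d ^ 2 / c_a + 1) * (1 / c_a + 1 / c_b), by positivity, ?_⟩
  intro V Q H _ _ _ _ _ _ _ _ _ ι _ a ha_symm ha_coer ha_bdd b hb_symm hb_coer _ c hc_symm hc_coer
    hc_bdd d hd_bdd τ T hτ hT f _ g u ut p pt hu hut hp hpt hu_eq hp_eq hut_eq hpt_eq hist₀ hist₁
    M₂ M₃ hM₂ hM₃ t ht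
  set I := Icc (0 : ℝ) T
  set X := Icc (-(2 * τ)) T
  set x := fun s => ι (pt s)
  have hI : UniqueDiffOn ℝ I := uniqueDiffOn_Icc hT
  have hX : UniqueDiffOn ℝ X := uniqueDiffOn_Icc (by linarith)
  have hIX : I ⊆ X := Icc_subset_Icc (by linarith) le_rfl
  have hx : ∀ r ∈ X, HasDerivWithinAt x (derivWithin x X r) X r :=
    fun r hr => (hpt.differentiableOn (by norm_num) r hr).hasDerivWithinAt
  have henergy := poroelasticEnergy_le_of_error_equations (a := a.mkContinuous₂ C_a ha_bdd)
    (c := c.mkContinuous₂ C_c hc_bdd) (d := d.mkContinuous₂ C_d hd_bdd) (ι := ι)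
    (eu := fun s => ut s - u s) (ep := fun s => pt s - p s)
    (eu' := fun s => derivWithin ut I s - derivWithin u I s) (η := extrapolationError x τ)
    (h' := fun s => derivWithin x X s - derivWithin (fun s => ι (p s)) I s)
    hca hT ha_symm ha_coer hb_symm (fun q => (by positivity : 0 ≤ c_b * ‖q‖ ^ 2).trans (hb_coer q))
    hc_symm (fun x => (by positivity : 0 ≤ c_c * ‖x‖ ^ 2).trans (hc_coer x)) hd_bdd
    (fun r hr => (hut.differentiableOn one_ne_zero r hr).hasDerivWithinAt.sub
      (hu.differentiableOn one_ne_zero r hr).hasDerivWithinAt)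
    ((hut.continuousOn_derivWithin hI le_rfl).sub (hu.continuousOn_derivWithin hI le_rfl))
    (fun r hr => (((hx r (hIX hr)).mono hIX).sub
      (hp.differentiableOn one_ne_zero r hr).hasDerivWithinAt).congr_of_mem
        (fun s _ => map_sub ι _ _) hr)
    (((hpt.continuousOn_derivWithin hX (by norm_num)).mono hIX).sub
      (hp.continuousOn_derivWithin hI le_rfl))
    (fun r hr => hasDerivWithinAt_extrapolationError hτ.le hx hr)
    (fun r hr v => by
      have h₁ := hu_eq r hr v
      have h₂ := hut_eq r hr v
      simp only [LinearMap.mkContinuous₂_apply, extrapolationError, x, map_sub, map_add,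
        _root_.sub_apply] at h₁ h₂ ⊢
      linarith)
    (fun r hr q => by
      have h₁ := hp_eq r hr q
      have h₂ := hpt_eq r hr q
      simp only [LinearMap.mkContinuous₂_apply, map_sub, LinearMap.sub_apply, _root_.sub_apply]
      linarith)
    (sub_eq_zero.2 hist₀)
    (by simp only [extrapolationError, x, zero_sub, ← map_smul, ← map_sub, hist₁, hist₀, sub_self])
    (fun r hr => norm_extrapolationError_le_of_contDiffOn hτ hT (hpt.of_le (by norm_num)) hM₂ hr)
    (fun r hr => norm_extrapolationError_le_of_contDiffOn hτ hT (hpt.derivWithin hX (by norm_num))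
      (fun s hs => by simpa [iteratedDerivWithin_succ'] using hM₃ s hs) hr) ht
  have hZ : 0 ≤ (1 / c_a + 1 / c_b) * t * τ ^ 4 * (M₂ ^ 2 + M₃ ^ 2) :=
    mul_nonneg (mul_nonneg (mul_nonneg (by positivity) ht.1) (by positivity)) (by positivity)
  calc ‖pt t - p t‖ ^ 2 + ‖ut t - u t‖ ^ 2
      ≤ (1 / c_a + 1 / c_b) * (t * (C_d ^ 2 / c_a * ((M₂ * τ ^ 2) ^ 2 + (M₃ * τ ^ 2) ^ 2))) :=
        norm_sq_add_norm_sq_le_of_poroelasticEnergy_le hca hcb (ha_coer _) (hb_coer _)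
          ((by positivity : 0 ≤ c_c * ‖ι (pt t - p t)‖ ^ 2).trans (hc_coer _)) henergy
    _ ≤ (C_d ^ 2 / c_a + 1) * (1 / c_a + 1 / c_b) * t * τ ^ 4 * (M₂ ^ 2 + M₃ ^ 2) := by
        linarith
end
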